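/- arXiv:2603.09633 — 9 statements merged into one kernel-verified Lean document; each statement's English description precedes it below -/
import Mathlib

section
/- If τ ∈ ℝⁿ₊ is a zero of a copositive matrix A (i.e., τᵀ A τ = 0), then for every index k in the support of τ, the k-th entry of Aτ equals zero, and for every k outside the support of τ, the k-th entry of Aτ is nonnegative. -/
open Matrix

/-- A symmetric real matrix is copositive if its quadratic form is nonnegative
on the nonnegative orthant. -/
def Copositive {n : ℕ} (A : Matrix (Fin n) (Fin n) ℝ) : Prop :=
  A.IsSymm ∧ ∀ t : Fin n → ℝ, (∀ i, 0 ≤ t i) → 0 ≤ t ⬝ᵥ A.mulVec t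

lemma quad_expand {n : ℕ} (A : Matrix (Fin n) (Fin n) ℝ) (hs : A.IsSymm)
    (τ : Fin n → ℝ) (k : Fin n) (ε : ℝ) :
    (τ + Pi.single k ε) ⬝ᵥ A.mulVec (τ + Pi.single k ε)
      = τ ⬝ᵥ A.mulVec τ + 2 * ε * A.mulVec τ k + ε^2 * A k k := by
  have h2 : Pi.single k ε ⬝ᵥ A.mulVec τ = ε * A.mulVec τ k := by
    simp [single_dotProduct]
  have h1 : τ ⬝ᵥ A.mulVec (Pi.single k ε) = ε * A.mulVec τ k := by
    rw [dotProduct_mulVec, ← mulVec_transpose, hs.eq, dotProduct_comm, h2]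
  have h3 : Pi.single k ε ⬝ᵥ A.mulVec (Pi.single k ε) = ε^2 * A k k := by
    simp [mulVec_single, single_dotProduct]; ring
  simp only [mulVec_add, dotProduct_add, add_dotProduct, h1, h2, h3]
  ring

/-- If `τ ∈ ℝⁿ₊` is a zero of a copositive matrix `A` (i.e. `τᵀ A τ = 0`), then
`(Aτ)ₖ = 0` for every `k` in the support of `τ` and `(Aτ)ₖ ≥ 0` for every `k`
outside the support of `τ`. -/
theorem zero_support_mulVec {n : ℕ} (A : Matrix (Fin n) (Fin n) ℝ)
    (hA : Copositive A) (τ : Fin n → ℝ) (hτ : ∀ i, 0 ≤ τ i) (hτ0 : τ ≠ 0)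
    (hzero : τ ⬝ᵥ A.mulVec τ = 0) :
    (∀ k, τ k ≠ 0 → A.mulVec τ k = 0) ∧ (∀ k, τ k = 0 → 0 ≤ A.mulVec τ k) := by
  obtain ⟨hs, hcop⟩ := hA
  -- the key inequality: for ε ≥ -τ k, 0 ≤ 2 ε (Aτ)_k + ε² A k k
  have key : ∀ (k : Fin n) (ε : ℝ), -τ k ≤ ε →
      0 ≤ 2 * ε * A.mulVec τ k + ε^2 * A k k := by
    intro k ε hε
    have hpos : ∀ i, 0 ≤ (τ + Pi.single k ε : Fin n → ℝ) i := by
      intro i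
      by_cases h : i = k
      · subst h; simpa using by linarith
      · simpa [Pi.single_apply, h] using hτ i
    have := hcop _ hpos
    rw [quad_expand A hs τ k ε, hzero] at this
    linarith
  set c : Fin n → ℝ := A.mulVec τ with hc
  constructor
  · intro k hk
    have hτk : 0 < τ k := lt_of_le_of_ne (hτ k) (Ne.symm hk)
    by_contra hne
    set d := A k k with hd
    set t : ℝ := min (1 / (|d| + 1)) (τ k / (|c k| + 1)) with ht
    have hdpos : 0 < |d| + 1 := by positivity
    have hcpos : 0 < |c k| + 1 := by positivity
    have ht0 : 0 < t := lt_min (by positivity) (by positivity)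
    set ε : ℝ := -(c k) * t with hε
    have habs : |ε| < τ k := by
      have h1 : |ε| = |c k| * t := by
        rw [hε, abs_mul, abs_neg, abs_of_pos ht0]
      have h2 : t ≤ τ k / (|c k| + 1) := min_le_right _ _
      have : |c k| * t ≤ |c k| * (τ k / (|c k| + 1)) :=
        mul_le_mul_of_nonneg_left h2 (abs_nonneg _)
      have hlt : |c k| * (τ k / (|c k| + 1)) < τ k := by
        rw [mul_div_assoc'] at *
        rw [div_lt_iff₀ hcpos]
        nlinarith [abs_nonneg (c k)]
      linarith [h1 ▸ lt_of_le_of_lt this hlt]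
    have hεge : -τ k ≤ ε := by
      have := neg_abs_le ε
      linarith [abs_lt.mp habs |>.1]
    have hkey := key k ε hεge
    -- 2 ε c + ε² d = t c² (t d - 2) < 0
    have hcne : c k ≠ 0 := hne
    have hc2 : 0 < (c k)^2 := by positivity
    have htd : t * d < 2 := by
      have h1 : t ≤ 1 / (|d| + 1) := min_le_left _ _
      have h2 : t * d ≤ t * |d| := mul_le_mul_of_nonneg_left (le_abs_self d) ht0.le
      have h3 : t * |d| ≤ (1 / (|d| + 1)) * |d| :=
        mul_le_mul_of_nonneg_right h1 (abs_nonneg _)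
      have h4 : (1 / (|d| + 1)) * |d| < 1 := by
        rw [div_mul_eq_mul_div, one_mul, div_lt_one hdpos]
        linarith
      linarith
    have hval : 2 * ε * c k + ε^2 * d = t * (c k)^2 * (t * d - 2) := by
      rw [hε]; ring
    have : t * (c k)^2 * (t * d - 2) < 0 :=
      mul_neg_of_pos_of_neg (by positivity) (by linarith)
    linarith [hval ▸ hkey]
  · intro k hk
    by_contra hne
    push_neg at hne
    set d := A k k with hd
    have hdpos : 0 < |d| + 1 := by positivity
    set t : ℝ := -(c k) / (|d| + 1) with ht
    have ht0 : 0 < t := div_pos (by linarith) hdpos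
    have hεge : -τ k ≤ t := by rw [hk]; linarith
    have hkey := key k t hεge
    have h1 : t * |d| < -(c k) := by
      rw [ht, div_mul_eq_mul_div, div_lt_iff₀ hdpos]
      nlinarith [abs_nonneg d, neg_pos.mpr hne]
    have h2 : t^2 * d ≤ t * (t * |d|) := by
      have : t * d ≤ t * |d| := mul_le_mul_of_nonneg_left (le_abs_self d) ht0.le
      nlinarith
    have h3 : t * (t * |d|) < t * (-(c k)) := by
      exact mul_lt_mul_of_pos_left h1 ht0
    nlinarith
end

section
/- Let A be copositive, I ⊆ [n] nonempty, τ a zero of A with I ⊆ supp(τ), σ := min_{k∈I} τₖ > 0, e* := ∑_{i∈I} eᵢ, and let B be the bordered matrix [[A, Ae*],[e*ᵀA, e*ᵀAe*]]. Then the vector y := ((τ − σe*)ᵀ, σ)ᵀ ∈ ℝ^{n+1} is nonnegative and satisfies yᵀ B y = 0, i.e., y is a zero of B. -/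
open Matrix

/-- The extension sending index `i < n` to the standard basis vector `eᵢ`
and the last index to the vector `a`. -/
def extVec {n : ℕ} (a : Fin n → ℝ) (i : Fin (n + 1)) : Fin n → ℝ :=
  Fin.lastCases a (fun k => Pi.single k 1) i

/-- The bordered matrix `B = [[A, A a], [aᵀ A, aᵀ A a]]`. -/
def border {n : ℕ} (A : Matrix (Fin n) (Fin n) ℝ) (a : Fin n → ℝ) :
    Matrix (Fin (n + 1)) (Fin (n + 1)) ℝ :=
  Matrix.of fun i j => extVec a i ⬝ᵥ A.mulVec (extVec a j)

/-- The indicator (0/1) vector `e* = ∑_{i ∈ I} eᵢ` of an index set `I`. -/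
def indic {n : ℕ} (I : Finset (Fin n)) : Fin n → ℝ :=
  fun k => if k ∈ I then 1 else 0

lemma border_eq {n : ℕ} (A : Matrix (Fin n) (Fin n) ℝ) (a : Fin n → ℝ) :
    border A a = (Matrix.of fun i k => extVec a i k) * A * (Matrix.of fun i k => extVec a i k)ᵀ := by
  ext i j
  simp [border, Matrix.mul_apply, dotProduct, Matrix.mulVec, Finset.sum_mul, Finset.mul_sum,
    mul_assoc]
  exact Finset.sum_comm

lemma transpose_mulVec_snoc {n : ℕ} (a x : Fin n → ℝ) (s : ℝ) :
    (Matrix.of fun i k => extVec a i k)ᵀ.mulVec (Fin.snoc x s) = x + s • a := by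
  ext k
  simp only [Matrix.mulVec, dotProduct, Matrix.transpose_apply, Matrix.of_apply]
  rw [Fin.sum_univ_castSucc]
  simp [extVec, Fin.snoc, Pi.single_apply, mul_comm]

lemma snoc_quad {n : ℕ} (A : Matrix (Fin n) (Fin n) ℝ) (a x : Fin n → ℝ) (s : ℝ) :
    Fin.snoc x s ⬝ᵥ (border A a).mulVec (Fin.snoc x s)
      = (x + s • a) ⬝ᵥ A.mulVec (x + s • a) := by
  rw [border_eq, ← Matrix.mulVec_mulVec, ← Matrix.mulVec_mulVec, Matrix.dotProduct_mulVec,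
    ← Matrix.mulVec_transpose, transpose_mulVec_snoc]

/-- Let `A` be copositive, `I ⊆ [n]` nonempty, `τ` a zero of `A` with
`I ⊆ supp(τ)`, `σ := min_{k ∈ I} τₖ`, and `B` the bordered matrix built from
`A` and `e*`.  Then `y := ((τ − σ e*)ᵀ, σ)ᵀ` is a nonzero nonnegative vector
with `yᵀ B y = 0`, i.e. `y` is a zero of `B`. -/
theorem border_zero {n : ℕ} (A : Matrix (Fin n) (Fin n) ℝ) (hA : Copositive A)
    (I : Finset (Fin n)) (hI : I.Nonempty)
    (τ : Fin n → ℝ) (hτ : ∀ i, 0 ≤ τ i) (hτ0 : τ ≠ 0)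
    (hzero : τ ⬝ᵥ A.mulVec τ = 0) (hsupp : ∀ i ∈ I, τ i ≠ 0)
    (σ : ℝ) (hσ : σ = I.inf' hI τ) :
    0 < σ ∧
    (∀ i, 0 ≤ (Fin.snoc (τ - σ • indic I) σ : Fin (n + 1) → ℝ) i) ∧
    (Fin.snoc (τ - σ • indic I) σ : Fin (n + 1) → ℝ) ≠ 0 ∧
    (Fin.snoc (τ - σ • indic I) σ : Fin (n + 1) → ℝ) ⬝ᵥ
      (border A (indic I)).mulVec (Fin.snoc (τ - σ • indic I) σ) = 0 := by
  have hσpos : 0 < σ := by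
    rw [hσ, Finset.lt_inf'_iff]
    exact fun b hb => lt_of_le_of_ne (hτ b) (Ne.symm (hsupp b hb))
  have hσle : ∀ k ∈ I, σ ≤ τ k := fun k hk => hσ ▸ Finset.inf'_le τ hk
  refine ⟨hσpos, ?_, ?_, ?_⟩
  · intro i
    refine Fin.lastCases ?_ ?_ i
    · simpa using hσpos.le
    · intro k
      simp only [Fin.snoc_castSucc, Pi.sub_apply, Pi.smul_apply, indic, smul_eq_mul]
      by_cases hk : k ∈ I
      · simp only [hk, if_true, mul_one, sub_nonneg]; exact hσle k hk
      · simp only [hk, if_false, mul_zero, sub_zero]; exact hτ k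
  · intro h
    have := congrFun h (Fin.last n)
    simp [Fin.snoc_last] at this
    exact hσpos.ne' this
  · rw [snoc_quad]
    have : τ - σ • indic I + σ • indic I = τ := by abel
    rw [this, hzero]
end

section
/- Let A be copositive, I ⊆ [n] nonempty, τ a zero of A with I ⊆ supp(τ), σ := min_{k∈I} τₖ, and B the bordered matrix built from A and e* = ∑_{i∈I} eᵢ. Set τ̄ := (τᵀ, 0)ᵀ and y := ((τ − σe*)ᵀ, σ)ᵀ. Then for every α ∈ [0,1], the convex combination α τ̄ + (1−α) y is a zero of B, i.e., (ατ̄ + (1−α)y)ᵀ B (ατ̄ + (1−α)y) = 0. -/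
open Matrix

lemma border_quadform {n : ℕ} (A : Matrix (Fin n) (Fin n) ℝ) (a : Fin n → ℝ)
    (z : Fin (n + 1) → ℝ) :
    z ⬝ᵥ (border A a).mulVec z =
      (fun k => z (Fin.castSucc k) + z (Fin.last n) * a k) ⬝ᵥ
        A.mulVec (fun k => z (Fin.castSucc k) + z (Fin.last n) * a k) := by
  set E : Matrix (Fin (n + 1)) (Fin n) ℝ := Matrix.of (fun i k => extVec a i k) with hE
  have hB : border A a = E * A * Eᵀ := by
    ext i j
    simp [border, hE, Matrix.mul_apply, dotProduct, Matrix.mulVec, Finset.mul_sum,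
      Finset.sum_mul, mul_comm, mul_assoc, mul_left_comm]
    rw [Finset.sum_comm]
  have hw : Eᵀ.mulVec z = fun k => z (Fin.castSucc k) + z (Fin.last n) * a k := by
    funext k
    simp only [Matrix.mulVec, dotProduct, Matrix.transpose_apply, hE, Matrix.of_apply]
    rw [Fin.sum_univ_castSucc]
    simp [extVec, Pi.single_apply, mul_comm]
  rw [hB, Matrix.mul_assoc, ← Matrix.mulVec_mulVec, ← Matrix.mulVec_mulVec,
    Matrix.dotProduct_mulVec, ← Matrix.mulVec_transpose, hw]

/-- Let `A` be copositive, `I ⊆ [n]` nonempty, `τ` a zero of `A` with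
`I ⊆ supp(τ)`, `σ := min_{k ∈ I} τₖ`, `B` the bordered matrix built from `A`
and `e*`, `τ̄ := (τᵀ, 0)ᵀ` and `y := ((τ − σ e*)ᵀ, σ)ᵀ`.  Then every convex
combination `α τ̄ + (1 − α) y`, `α ∈ [0, 1]`, is a zero of `B`. -/
theorem border_zero_convexComb {n : ℕ} (A : Matrix (Fin n) (Fin n) ℝ)
    (hA : Copositive A) (I : Finset (Fin n)) (hI : I.Nonempty)
    (τ : Fin n → ℝ) (hτ : ∀ i, 0 ≤ τ i) (hτ0 : τ ≠ 0)
    (hzero : τ ⬝ᵥ A.mulVec τ = 0) (hsupp : ∀ i ∈ I, τ i ≠ 0)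
    (σ : ℝ) (hσ : σ = I.inf' hI τ)
    (α : ℝ) (hα0 : 0 ≤ α) (hα1 : α ≤ 1) :
    (α • (Fin.snoc τ 0 : Fin (n + 1) → ℝ) +
        (1 - α) • (Fin.snoc (τ - σ • indic I) σ : Fin (n + 1) → ℝ)) ⬝ᵥ
      (border A (indic I)).mulVec
        (α • (Fin.snoc τ 0 : Fin (n + 1) → ℝ) +
          (1 - α) • (Fin.snoc (τ - σ • indic I) σ : Fin (n + 1) → ℝ)) = 0 := by
  rw [border_quadform]
  have : (fun k =>
      (α • (Fin.snoc τ 0 : Fin (n + 1) → ℝ) +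
        (1 - α) • (Fin.snoc (τ - σ • indic I) σ : Fin (n + 1) → ℝ)) (Fin.castSucc k) +
      (α • (Fin.snoc τ 0 : Fin (n + 1) → ℝ) +
        (1 - α) • (Fin.snoc (τ - σ • indic I) σ : Fin (n + 1) → ℝ)) (Fin.last n) * indic I k)
      = τ := by
    funext k
    simp [Fin.snoc_castSucc, Fin.snoc_last]
    ring
  rw [this, hzero]
end

section
/- Let A be copositive and B the bordered matrix built from A and a nonempty set I ⊆ [n]. If z̄ = (zᵀ, z₀)ᵀ ∈ ℝ^{n+1}₊ is a zero of B, then the vector z + z₀ e* ∈ ℝⁿ₊ is a zero of A (or the zero vector), where e* = ∑_{i∈I} eᵢ. -/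
open Matrix

/-- If `z̄ = (zᵀ, z₀)ᵀ ∈ ℝ^{n+1}₊` is a zero of the bordered matrix `B` built
from a copositive `A` and a nonempty `I ⊆ [n]`, then `z + z₀ e* ∈ ℝⁿ₊`
satisfies `(z + z₀ e*)ᵀ A (z + z₀ e*) = 0`, i.e. it is a zero of `A`
(or the zero vector). -/
theorem border_zero_projects {n : ℕ} (A : Matrix (Fin n) (Fin n) ℝ)
    (hA : Copositive A) (I : Finset (Fin n)) (hI : I.Nonempty)
    (z : Fin n → ℝ) (z₀ : ℝ) (hz : ∀ i, 0 ≤ z i) (hz₀ : 0 ≤ z₀)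
    (hne : (Fin.snoc z z₀ : Fin (n + 1) → ℝ) ≠ 0)
    (hzero : (Fin.snoc z z₀ : Fin (n + 1) → ℝ) ⬝ᵥ
      (border A (indic I)).mulVec (Fin.snoc z z₀) = 0) :
    (∀ i, 0 ≤ (z + z₀ • indic I) i) ∧
    (z + z₀ • indic I) ⬝ᵥ A.mulVec (z + z₀ • indic I) = 0 := by
  set a := indic I with ha
  refine ⟨fun i => by
    simp only [Pi.add_apply, Pi.smul_apply, smul_eq_mul, ha, indic]
    have : (0:ℝ) ≤ (if i ∈ I then (1:ℝ) else 0) := by positivity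
    have := mul_nonneg hz₀ this
    linarith [hz i], ?_⟩
  set E : Matrix (Fin (n+1)) (Fin n) ℝ := Matrix.of (extVec a) with hE
  have hB : border A a = E * A * Eᵀ := by
    ext i j
    simp only [border, Matrix.of_apply, Matrix.mul_apply, Matrix.transpose_apply, hE,
      Matrix.mulVec, dotProduct, Finset.mul_sum, Finset.sum_mul]
    rw [Finset.sum_comm]
    apply Finset.sum_congr rfl
    intro k _
    apply Finset.sum_congr rfl
    intro l _
    ring
  have hw : (Fin.snoc z z₀ : Fin (n+1) → ℝ) ᵥ* E = z + z₀ • a := by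
    funext j
    simp only [Matrix.vecMul, dotProduct, hE, Matrix.of_apply]
    rw [Fin.sum_univ_castSucc]
    simp only [Fin.snoc_castSucc, Fin.snoc_last, extVec, Fin.lastCases_castSucc,
      Fin.lastCases_last]
    have : ∑ i : Fin n, z i * (Pi.single i 1 : Fin n → ℝ) j = z j := by
      rw [Finset.sum_eq_single j]
      · simp
      · intro b _ hb
        simp [Pi.single_apply, hb]
      · simp
    rw [this]
    simp [mul_comm]
  have key : (Fin.snoc z z₀ : Fin (n+1) → ℝ) ⬝ᵥ
      (border A a).mulVec (Fin.snoc z z₀) =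
      (z + z₀ • a) ⬝ᵥ A.mulVec (z + z₀ • a) := by
    rw [hB, ← Matrix.mulVec_mulVec, ← Matrix.mulVec_mulVec,
      Matrix.dotProduct_mulVec, Matrix.mulVec_transpose, hw]
  rw [← key]
  exact hzero
end

section
/- Let n ≥ 5 be odd, and let 𝒜 be the circulant n×n symmetric matrix with entries 𝒜ᵢⱼ = α if i = j, β if |i−j| ∈ {1, n−1}, 1 if |i−j| ∈ {2, n−2}, and 0 otherwise, where α = 2(1 + 2cos(π/(n+1))cos(3π/(n+1))) and β = −2(cos(π/(n+1)) + cos(3π/(n+1))). Suppose u ∈ ℝ^{n−2} is a positive vector and j ∈ [n] is such that the vector τʲ with support I(j) := [n] \ {n−j, n−j+1} (for j ≤ n−1; I(n) := [n]\{1,n}) and entries u on I(j) satisfies ∑_{k∈I(j)} 𝒜ᵢₖ uₖ = 0 for all i ∈ I(j) and ∑_{k∈I(j)} 𝒜ᵢₖ uₖ = λᵢ ≥ 0 for i ∉ I(j). Then λᵢ > 0 for i ∉ I(j); i.e., supp(𝒜τʲ) = [n] \ I(j). -/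
open Matrix Real

/-- The Hildebrand-type circulant matrix: `𝒜ᵢⱼ = α` if `i = j`, `β` if
`|i − j| ∈ {1, n−1}`, `1` if `|i − j| ∈ {2, n−2}`, and `0` otherwise, where
`α = 2(1 + 2cos(π/(n+1))cos(3π/(n+1)))` and
`β = −2(cos(π/(n+1)) + cos(3π/(n+1)))`. -/
noncomputable def hilA (n : ℕ) : Matrix (Fin n) (Fin n) ℝ :=
  Matrix.of fun i j =>
    if i = j then 2 * (1 + 2 * Real.cos (π / (n + 1)) * Real.cos (3 * π / (n + 1)))
    else if max i.val j.val - min i.val j.val = 1 ∨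
            max i.val j.val - min i.val j.val = n - 1 then
      -2 * (Real.cos (π / (n + 1)) + Real.cos (3 * π / (n + 1)))
    else if max i.val j.val - min i.val j.val = 2 ∨
            max i.val j.val - min i.val j.val = n - 2 then 1
    else 0

/-- Enumeration (in increasing order) of the index set `I(j)`, which is `[n]`
(0-based) with two "cyclically consecutive" indices removed: for a 1-based
`j ∈ [n−1]` (`j.val < n − 1` in 0-based terms) the removed indices are
`{n−j, n−j+1}` (1-based) and for `j = n` they are `{1, n}` (1-based). -/
def embIdx (n : ℕ) (j : Fin n) (k : Fin (n - 2)) : Fin n :=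
  if _ : j.val = n - 1 then ⟨k.val + 1, by have := k.isLt; omega⟩
  else if _ : k.val < n - 2 - j.val then ⟨k.val, by have := k.isLt; omega⟩
  else ⟨k.val + 2, by have := k.isLt; omega⟩

/-
`𝒜` is a symmetric circulant matrix, so it commutes with the cyclic shift `S`. Let `{m, m + 1}` be
the complement of `I(j)` and `λ = 𝒜τ`, which is supported there. The identity
`⟨Sτ, 𝒜τ⟩ = ⟨𝒜Sτ, τ⟩` reads `τ_{m+2} λ_{m+1} = τ_{m-1} λ_m` with `τ_{m-1}, τ_{m+2} > 0`, so
`λ_m` and `λ_{m+1}` have the same sign. Summing the entries of `𝒜τ` gives `λ_m + λ_{m+1} = (α + 2β + 2) ∑ u`, and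
`α + 2β + 2 = 4 (1 - cos (π/(n+1))) (1 - cos (3π/(n+1))) > 0`; hence both are positive.
-/

namespace Matrix

theorem IsSymm.dotProduct_mulVec_comm {ι : Type*} [Fintype ι] {A : Matrix ι ι ℝ} (hA : A.IsSymm)
    (σ τ : ι → ℝ) : σ ⬝ᵥ (A *ᵥ τ) = (A *ᵥ σ) ⬝ᵥ τ := by
  rw [dotProduct_mulVec, ← mulVec_transpose, hA.eq]

variable {G : Type*} [AddGroup G] [Fintype G]

theorem sum_circulant_mulVec (v τ : G → ℝ) :
    ∑ i, (circulant v *ᵥ τ) i = (∑ d, v d) * ∑ p, τ p := by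
  simp only [mulVec, dotProduct, circulant_apply]
  rw [Finset.sum_comm, Finset.mul_sum]
  refine Finset.sum_congr rfl fun p _ => ?_
  rw [← Finset.sum_mul, ← (Equiv.subRight p).sum_comp v]
  rfl

theorem circulant_mulVec_comp_add_right (v τ : G → ℝ) (g i : G) :
    (circulant v *ᵥ fun p => τ (p + g)) i = (circulant v *ᵥ τ) (i + g) := by
  simp only [mulVec, dotProduct, circulant_apply]
  rw [← Equiv.sum_comp (Equiv.addRight g) fun q => v (i + g - q) * τ q]
  simp only [Equiv.coe_addRight, add_sub_add_right_eq_sub]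

theorem circulant_mulVec_pos_on_gap {v : G → ℝ} (hv : (circulant v).IsSymm)
    (hv_sum : 0 < ∑ d, v d) {τ : G → ℝ} (hτ : ∀ i, 0 ≤ τ i) {m g : G}
    (hτ_m : τ m = 0) (hτ_mg : τ (m + g) = 0) (hτ_prev : 0 < τ (m - g))
    (hτ_next : 0 < τ (m + g + g))
    (h_off : ∀ i, i ≠ m → i ≠ m + g → (circulant v *ᵥ τ) i = 0) :
    0 < (circulant v *ᵥ τ) m ∧ 0 < (circulant v *ᵥ τ) (m + g) := by
  have hg : g ≠ 0 := by
    rintro rfl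
    rw [sub_zero, hτ_m] at hτ_prev
    exact hτ_prev.false
  have hm_ne : m ≠ m + g := by simpa [eq_comm] using hg
  have hprev_ne : m - g ≠ m := by simpa using hg
  have h_pair := hv.dotProduct_mulVec_comm (fun p => τ (p + g)) τ
  simp only [dotProduct, circulant_mulVec_comp_add_right] at h_pair
  set l := circulant v *ᵥ τ
  have h_total : l m + l (m + g) = (∑ d, v d) * ∑ p, τ p := by
    rw [← sum_circulant_mulVec, Fintype.sum_eq_add m (m + g) hm_ne fun i hi => h_off i hi.1 hi.2]
  have hτ_sum : 0 < ∑ p, τ p :=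
    Finset.sum_pos' (fun i _ => hτ i) ⟨m - g, Finset.mem_univ _, hτ_prev⟩
  have h_balance : τ (m + g + g) * l (m + g) = τ (m - g) * l m := by
    rw [Fintype.sum_eq_add m (m + g) hm_ne, Fintype.sum_eq_add (m - g) m hprev_ne] at h_pair
    · rw [sub_add_cancel, hτ_mg, hτ_m] at h_pair
      linarith
    · rintro i ⟨hi₁, hi₂⟩
      rw [h_off (i + g) (fun h => hi₁ (eq_sub_of_add_eq h)) (fun h => hi₂ (add_right_cancel h)),
        zero_mul]
    · rintro i ⟨hi₁, hi₂⟩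
      rw [h_off i hi₁ hi₂, mul_zero]
  have h_iff : 0 < l m ↔ 0 < l (m + g) := by
    rw [← mul_pos_iff_of_pos_left hτ_prev, ← h_balance, mul_pos_iff_of_pos_left hτ_next]
  have h_sum_pos : 0 < l m + l (m + g) := h_total ▸ mul_pos hv_sum hτ_sum
  have h_pos_m : 0 < l m := by
    by_contra h
    have := mt h_iff.mpr h
    linarith
  exact ⟨h_pos_m, h_iff.mp h_pos_m⟩

end Matrix

theorem hilA_apply_eq_sub (n : ℕ) [NeZero n] (i p : Fin n) : hilA n i p = hilA n (i - p) 0 := by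
  have hi := i.isLt
  have hp := p.isLt
  have h_sub : (i - p).val = if p ≤ i then i.val - p.val else n - p.val + i.val := by
    split_ifs with h
    · exact Fin.coe_sub_iff_le.mpr h
    · rw [Fin.coe_sub_iff_lt.mpr (not_le.mp h)]; omega
  simp only [hilA, of_apply, Fin.ext_iff, Fin.val_zero, h_sub, Fin.le_iff_val_le_val]
  split_ifs <;> first | rfl | omega

theorem hilA_eq_circulant (n : ℕ) [NeZero n] : hilA n = circulant fun d => hilA n d 0 := by
  ext i p
  rw [circulant_apply, hilA_apply_eq_sub]

theorem hilA_isSymm (n : ℕ) : (hilA n).IsSymm := by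
  ext i p
  simp only [hilA, transpose_apply, of_apply, eq_comm, max_comm, min_comm]

theorem sum_hilA_col_zero (n : ℕ) [NeZero n] (hn : 5 ≤ n) :
    ∑ d : Fin n, hilA n d 0 = 4 * (1 - cos (π / (n + 1))) * (1 - cos (3 * π / (n + 1))) := by
  obtain ⟨m, rfl⟩ : ∃ m, n = m + 5 := ⟨n - 5, by omega⟩
  simp only [hilA, of_apply, Fin.ext_iff, Fin.val_zero, max_eq_left (Nat.zero_le _),
    min_eq_right (Nat.zero_le _), Nat.sub_zero]
  rw [Fin.sum_univ_eq_sum_range (fun k => if k = 0 then _ else if k = 1 ∨ k = m + 5 - 1 then _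
    else if k = 2 ∨ k = m + 5 - 2 then _ else _)]
  rw [Finset.sum_range_succ, Finset.sum_range_succ, Finset.sum_range_succ', Finset.sum_range_succ',
    Finset.sum_range_succ', Finset.sum_eq_zero fun k hk => ?_]
  · simp only [zero_add, Nat.reduceAdd, OfNat.ofNat_ne_zero, ↓reduceIte, OfNat.ofNat_ne_one,
      Nat.add_one_sub_one, Nat.right_eq_add, Nat.add_eq_zero_iff, and_false, or_self,
      Nat.reduceSubDiff, one_ne_zero, or_false, Nat.reduceEqDiff, Nat.add_left_cancel_iff, or_true]
    ring
  · have := Finset.mem_range.mp hk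
    rw [if_neg (by omega), if_neg (by omega), if_neg (by omega)]

theorem Real.cos_lt_one_of_pos_of_le_pi {x : ℝ} (h₀ : 0 < x) (hπ : x ≤ π) : cos x < 1 :=
  cos_zero ▸ cos_lt_cos_of_nonneg_of_le_pi le_rfl hπ h₀

theorem sum_hilA_col_zero_pos {n : ℕ} [NeZero n] (hn : 5 ≤ n) : 0 < ∑ d : Fin n, hilA n d 0 := by
  have hn' : (5 : ℝ) ≤ n := by exact_mod_cast hn
  have h_den : (0 : ℝ) < n + 1 := by linarith
  rw [sum_hilA_col_zero n hn]
  refine mul_pos (mul_pos four_pos (sub_pos.mpr ?_)) (sub_pos.mpr ?_) <;>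
    refine Real.cos_lt_one_of_pos_of_le_pi (by positivity) ?_ <;>
    rw [div_le_iff₀ h_den] <;> nlinarith [pi_pos]

/-- The 0-based index `m` with `[n] \ I(j) = {m, m + 1}` in `Fin n`; for `j = n` the gap `{n, 1}`
wraps around. -/
def embIdxGap (n : ℕ) (j : Fin n) : Fin n :=
  ⟨if j.val = n - 1 then n - 1 else n - 2 - j.val, by have := j.pos; split_ifs <;> omega⟩

theorem val_embIdxGap_add_one {n : ℕ} [NeZero n] (hn : 2 ≤ n) (j : Fin n) :
    (embIdxGap n j + 1).val = if j.val = n - 1 then 0 else n - 1 - j.val := by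
  have hj := j.isLt
  rw [Fin.val_add, Fin.val_one', Nat.mod_eq_of_lt (show 1 < n by omega)]
  simp only [embIdxGap]
  split_ifs
  · rw [Nat.sub_add_cancel (by omega), Nat.mod_self]
  · rw [Nat.mod_eq_of_lt (by omega)]
    omega

theorem embIdx_ne_iff {n : ℕ} [NeZero n] (hn : 3 ≤ n) (j i : Fin n) :
    (∀ k, embIdx n j k ≠ i) ↔ i = embIdxGap n j ∨ i = embIdxGap n j + 1 := by
  have hj := j.isLt
  have hi := i.isLt
  rw [Fin.ext_iff, Fin.ext_iff (b := _ + 1), val_embIdxGap_add_one (by omega)]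
  simp only [embIdxGap]
  constructor
  · contrapose!
    intro hi_gap
    split_ifs at hi_gap with hjn
    · exact ⟨⟨i.val - 1, by omega⟩, by simp only [embIdx, hjn, ↓reduceDIte, Fin.ext_iff]; omega⟩
    · by_cases hlt : i.val < n - 2 - j.val
      · exact ⟨⟨i.val, by omega⟩, by simp only [embIdx, hjn, ↓reduceDIte, hlt]⟩
      · have hlt' : ¬i.val - 2 < n - 2 - j.val := by omega
        exact ⟨⟨i.val - 2, by omega⟩, by simp only [embIdx, hjn, ↓reduceDIte, hlt', Fin.ext_iff]; omega⟩
  · intro hi_gap k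
    unfold embIdx
    split_ifs at hi_gap ⊢ <;> simp only [ne_eq, Fin.ext_iff] <;> omega

theorem exists_embIdx_eq_iff {n : ℕ} [NeZero n] (hn : 3 ≤ n) (j i : Fin n) :
    (∃ k, embIdx n j k = i) ↔ i ≠ embIdxGap n j ∧ i ≠ embIdxGap n j + 1 := by
  rw [← not_forall_not, embIdx_ne_iff hn, not_or]

theorem exists_embIdx_eq_embIdxGap_sub_one_and_add_two {n : ℕ} [NeZero n] (hn : 3 ≤ n) (j : Fin n) :
    (∃ k, embIdx n j k = embIdxGap n j - 1) ∧ ∃ k, embIdx n j k = embIdxGap n j + 1 + 1 := by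
  obtain ⟨h1, h2⟩ : (1 : Fin n) ≠ 0 ∧ (1 + 1 : Fin n) ≠ 0 := by
    simp only [ne_eq, Fin.ext_iff, Fin.val_add, Fin.val_one', Fin.val_zero]
    rw [Nat.mod_eq_of_lt (by omega : 1 < n), Nat.mod_eq_of_lt (by omega : 1 + 1 < n)]
    omega
  set m := embIdxGap n j
  have h_prev₁ : m - 1 ≠ m := fun h => h1 (sub_eq_self.mp h)
  have h_prev₂ : m - 1 ≠ m + 1 := fun h => h2 <| left_eq_add.mp <| by
    rw [← add_assoc, ← h, sub_add_cancel]
  have h_next₁ : m + 1 + 1 ≠ m := fun h => h2 <| add_eq_left.mp <| by rw [← add_assoc, h]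
  have h_next₂ : m + 1 + 1 ≠ m + 1 := fun h => h1 (add_eq_left.mp h)
  simp only [exists_embIdx_eq_iff hn]
  exact ⟨⟨h_prev₁, h_prev₂⟩, h_next₁, h_next₂⟩

/-- For odd `n ≥ 5`: if `τ` is supported on `I(j)` with positive palindromic
entries `u` there, `(𝒜τ)ᵢ = 0` for `i ∈ I(j)` and `(𝒜τ)ᵢ = λᵢ ≥ 0` for
`i ∉ I(j)`, then `λᵢ > 0` for every `i ∉ I(j)`; i.e.
`supp(𝒜τ) = [n] \ I(j)`. -/
theorem hilA_mulVec_pos_off_support (n : ℕ) (hn : 5 ≤ n)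
    (j : Fin n) (u : Fin (n - 2) → ℝ) (hu : ∀ k, 0 < u k)
    (τ : Fin n → ℝ)
    (hτu : ∀ k : Fin (n - 2), τ (embIdx n j k) = u k)
    (hτ0 : ∀ i : Fin n, (∀ k, embIdx n j k ≠ i) → τ i = 0)
    (hz : ∀ k : Fin (n - 2), (hilA n).mulVec τ (embIdx n j k) = 0) :
    ∀ i : Fin n, (∀ k, embIdx n j k ≠ i) → 0 < (hilA n).mulVec τ i := by
  have : NeZero n := ⟨by omega⟩
  have hn3 : 3 ≤ n := by omega
  set m := embIdxGap n j
  have h_gap : ∀ i, (∀ k, embIdx n j k ≠ i) ↔ i = m ∨ i = m + 1 := embIdx_ne_iff hn3 j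
  have hτ_pos (k : Fin (n - 2)) : 0 < τ (embIdx n j k) := hτu k ▸ hu k
  have hτ_nonneg (i : Fin n) : 0 ≤ τ i := by
    by_cases hi : ∀ k, embIdx n j k ≠ i
    · exact (hτ0 i hi).ge
    · obtain ⟨k, rfl⟩ := not_forall_not.mp hi
      exact (hτ_pos k).le
  obtain ⟨⟨k_prev, hk_prev⟩, ⟨k_next, hk_next⟩⟩ :=
    exists_embIdx_eq_embIdxGap_sub_one_and_add_two hn3 j
  have hA := hilA_eq_circulant n
  rw [hA] at hz ⊢
  have key := circulant_mulVec_pos_on_gap (hA ▸ hilA_isSymm n) (sum_hilA_col_zero_pos hn)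
    hτ_nonneg (hτ0 m ((h_gap m).2 (Or.inl rfl))) (hτ0 (m + 1) ((h_gap _).2 (Or.inr rfl)))
    (hk_prev ▸ hτ_pos k_prev) (hk_next ▸ hτ_pos k_next)
    (fun i h₁ h₂ => by
      obtain ⟨k, rfl⟩ := (exists_embIdx_eq_iff hn3 j i).2 ⟨h₁, h₂⟩
      exact hz k)
  intro i hi
  rcases (h_gap i).1 hi with rfl | rfl
  exacts [key.1, key.2]
end

section
/- Let K be a proper cone in a finite-dimensional inner product space, v ∈ K* \ {0} generate an exposed ray of the dual cone K*, and x ∈ ℝ₊v, x ≠ 0. Then F := K ∩ x^⊥ = {y ∈ K : ⟨x, y⟩ = 0} is a maximal face of K. -/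
/-! `F` is the face of `K` exposed by `x ∈ K*`. A proper face `G ⊇ F` cannot meet the interior
of `K`, so separating `G` from `int K` yields a nonzero `u ∈ K*` vanishing on `G`. As `u` also
vanishes at the exposing vector `w ∈ F ⊆ G`, it lies on the exposed ray `ℝ₊ v`, whence
`G ⊆ K ∩ v^⊥ = F`. -/

open RealInnerProductSpace

variable {E : Type*} [NormedAddCommGroup E] [InnerProductSpace ℝ E]

/-- The dual cone of a set `K`. -/
def dualC (K : Set E) : Set E := {u | ∀ x ∈ K, 0 ≤ (inner ℝ x u : ℝ)}

/-- `F` is a face of the convex cone `K`: a nonempty convex subset of `K` such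
that whenever a strict convex combination of two points of `K` lies in `F`,
both points lie in `F`. -/
def IsFaceOf (K F : Set E) : Prop :=
  F.Nonempty ∧ F ⊆ K ∧ Convex ℝ F ∧
    ∀ x ∈ K, ∀ y ∈ K, ∀ α : ℝ, 0 < α → α < 1 →
      α • x + (1 - α) • y ∈ F → x ∈ F ∧ y ∈ F

/-- `F` is a maximal face of `K`: a proper face not strictly contained in any
other proper face. -/
def IsMaximalFaceOf (K F : Set E) : Prop :=
  IsFaceOf K F ∧ F ≠ K ∧ ∀ G, IsFaceOf K G → G ≠ K → F ⊆ G → G = F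

open Topology

theorem IsFaceOf.smul_mem {K G : Set E} (hcone : ∀ x ∈ K, ∀ c : ℝ, 0 < c → c • x ∈ K)
    (hG : IsFaceOf K G) {y : E} (hy : y ∈ G) {t : ℝ} (ht : 0 < t) : t • y ∈ G := by
  have hyK : y ∈ K := hG.2.1 hy
  have hcomb : (1 + t)⁻¹ • (t • y) + (1 - (1 + t)⁻¹) • (t⁻¹ • y) = y := by
    match_scalars
    field_simp
    ring
  refine (hG.2.2.2 _ (hcone y hyK t ht) _ (hcone y hyK t⁻¹ (inv_pos.mpr ht)) (1 + t)⁻¹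
    (by positivity) (inv_lt_one_of_one_lt₀ (by linarith)) ?_).1
  rwa [hcomb]

theorem IsFaceOf.eq_of_mem_interior {K G : Set E} (hG : IsFaceOf K G) {p : E} (hpG : p ∈ G)
    (hpK : p ∈ interior K) : G = K := by
  refine hG.2.1.antisymm fun z hz => ?_
  -- Push `p` slightly beyond itself along the ray from `z`, staying inside `K`.
  have hline : Filter.Tendsto (fun s : ℝ => AffineMap.lineMap z p s) (𝓝[>] 1) (𝓝 p) := by
    have := ((AffineMap.lineMap_continuous (R := ℝ) (p := z) (q := p)).tendsto 1).mono_left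
      (nhdsWithin_le_nhds (s := Set.Ioi 1))
    simpa using this
  obtain ⟨s, hsK, hs : 1 < s⟩ :=
    ((hline.eventually (mem_interior_iff_mem_nhds.mp hpK)).and self_mem_nhdsWithin).exists
  have hcomb : s⁻¹ • AffineMap.lineMap z p s + (1 - s⁻¹) • z = p := by
    rw [AffineMap.lineMap_apply_module]
    match_scalars <;> field_simp; ring
  exact (hG.2.2.2 _ hsK z hz s⁻¹ (by positivity) (inv_lt_one_of_one_lt₀ hs)
    (by rwa [hcomb])).2

theorem isFaceOf_setOf_inner_eq_zero {K : Set E} (hconv : Convex ℝ K) {x : E}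
    (hx : x ∈ dualC K) (hne : ∃ y ∈ K, ⟪x, y⟫ = 0) :
    IsFaceOf K {y ∈ K | ⟪x, y⟫ = 0} := by
  have hnonneg : ∀ y ∈ K, 0 ≤ ⟪x, y⟫ := fun y hy => real_inner_comm x y ▸ hx y hy
  refine ⟨hne, fun y hy => hy.1, ?_, ?_⟩
  · intro a ha b hb α β hα hβ hαβ
    refine ⟨hconv ha.1 hb.1 hα hβ hαβ, ?_⟩
    simp only [inner_add_right, real_inner_smul_right, ha.2, hb.2, mul_zero, add_zero]
  · intro a ha b hb α hα₀ hα₁ hmem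
    have hsum : α * ⟪x, a⟫ + (1 - α) * ⟪x, b⟫ = 0 := by
      simpa only [inner_add_right, real_inner_smul_right] using hmem.2
    have ha₀ := hnonneg a ha
    have hb₀ := hnonneg b hb
    exact ⟨⟨ha, by nlinarith⟩, ⟨hb, by nlinarith⟩⟩

theorem setOf_inner_eq_zero_ne {K : Set E} (hspan : Submodule.span ℝ K = ⊤) {x : E}
    (hx : x ≠ 0) : {y ∈ K | ⟪x, y⟫ = 0} ≠ K := by
  intro h
  have hK : K ⊆ LinearMap.ker (innerₛₗ ℝ x) := fun y hy => ((Set.ext_iff.mp h y).mpr hy).2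
  have hxx : x ∈ LinearMap.ker (innerₛₗ ℝ x) := by
    rw [← Submodule.span_le, hspan] at hK
    exact hK Submodule.mem_top
  exact hx (inner_self_eq_zero.mp hxx)

theorem interior_nonempty_of_span_eq_top [FiniteDimensional ℝ E] {K : Set E}
    (hconv : Convex ℝ K) (hcone : ∀ x ∈ K, ∀ c : ℝ, 0 < c → c • x ∈ K) (hne : K.Nonempty)
    (hspan : Submodule.span ℝ K = ⊤) : (interior K).Nonempty := by
  rw [hconv.interior_nonempty_iff_affineSpan_eq_top,
    AffineSubspace.affineSpan_eq_top_iff_vectorSpan_eq_top_of_nonempty ℝ E E hne, eq_top_iff,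
    ← hspan, Submodule.span_le]
  intro y hy
  simpa [two_smul] using vsub_mem_vectorSpan ℝ (hcone y hy 2 two_pos) hy

theorem nonpos_of_forall_le_of_smul_mem (f : E →L[ℝ] ℝ) {C : Set E}
    (hcone : ∀ x ∈ C, ∀ c : ℝ, 0 < c → c • x ∈ C) {r : ℝ} (hf : ∀ y ∈ C, f y ≤ r) :
    ∀ y ∈ C, f y ≤ 0 := by
  intro y hy
  by_contra! hpos
  have hscaled := hf _ (hcone y hy ((|r| + 1) / f y) (by positivity))
  rw [map_smul, smul_eq_mul, div_mul_cancel₀ _ hpos.ne'] at hscaled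
  linarith [le_abs_self r]

theorem IsFaceOf.exists_mem_dualC_ne_zero_forall_inner_eq_zero [FiniteDimensional ℝ E]
    {K G : Set E} (hconv : Convex ℝ K) (hcone : ∀ x ∈ K, ∀ c : ℝ, 0 < c → c • x ∈ K)
    (hint : (interior K).Nonempty) (hG : IsFaceOf K G) (hGK : G ≠ K) :
    ∃ u ∈ dualC K, u ≠ 0 ∧ ∀ g ∈ G, ⟪g, u⟫ = 0 := by
  have hdisj : Disjoint (interior K) G :=
    Set.disjoint_left.mpr fun p hpK hpG => hGK (hG.eq_of_mem_interior hpG hpK)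
  obtain ⟨f, r, hfK, hfG⟩ :=
    geometric_hahn_banach_open hconv.interior isOpen_interior hG.2.2.1 hdisj
  have hK_le : ∀ y ∈ K, f y ≤ r := by
    have hcl : closure (interior K) ⊆ {y | f y ≤ r} :=
      closure_minimal (fun y hy => (hfK y hy).le) (isClosed_le f.continuous continuous_const)
    rw [hconv.closure_interior_eq_closure_of_nonempty_interior hint] at hcl
    exact fun y hy => hcl (subset_closure hy)
  have hK_nonpos := nonpos_of_forall_le_of_smul_mem f hcone hK_le
  have hG_nonneg : ∀ g ∈ G, 0 ≤ f g := by
    have := nonpos_of_forall_le_of_smul_mem (-f) (fun y hy c hc => hG.smul_mem hcone hy hc)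
      (r := -r) fun g hg => by simpa using hfG g hg
    intro g hg
    simpa using this g hg
  refine ⟨-(InnerProductSpace.toDual ℝ E).symm f, fun y hy => ?_, ?_, fun g hg => ?_⟩
  · rw [inner_neg_right, real_inner_comm, InnerProductSpace.toDual_symm_apply]
    linarith [hK_nonpos y hy]
  · obtain ⟨p, hp⟩ := hint
    obtain ⟨g, hg⟩ := hG.1
    intro hu
    have hf : f = 0 := by simpa using hu
    simpa [hf] using (hfK p hp).trans_le (hfG g hg)
  · rw [inner_neg_right, real_inner_comm, InnerProductSpace.toDual_symm_apply, neg_eq_zero]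
    exact le_antisymm (hK_nonpos g (hG.2.1 hg)) (hG_nonneg g hg)

theorem maximal_face_from_exposed_ray_general [FiniteDimensional ℝ E]
    (K : Set E) (hconv : Convex ℝ K)
    (hcone : ∀ x ∈ K, ∀ c : ℝ, 0 < c → c • x ∈ K)
    (hfull : Submodule.span ℝ K = ⊤)
    (v : E)
    (hexp : ∃ w ∈ K, dualC K ∩ {u | (inner ℝ w u : ℝ) = 0} =
      {u | ∃ c : ℝ, 0 ≤ c ∧ u = c • v})
    (x : E) (hx : ∃ c : ℝ, 0 ≤ c ∧ x = c • v) (hx0 : x ≠ 0) :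
    IsMaximalFaceOf K {y ∈ K | (inner ℝ x y : ℝ) = 0} := by
  obtain ⟨w, hwK, hray⟩ := hexp
  obtain ⟨hxK, hwx⟩ : x ∈ dualC K ∩ {u | ⟪w, u⟫ = 0} := hray ▸ hx
  have hwF : w ∈ {y ∈ K | ⟪x, y⟫ = 0} := ⟨hwK, by rwa [real_inner_comm]⟩
  refine ⟨isFaceOf_setOf_inner_eq_zero hconv hxK ⟨w, hwF⟩, setOf_inner_eq_zero_ne hfull hx0,
    fun G hG hGK hFG => ?_⟩
  obtain ⟨u, huK, hu0, huG⟩ := hG.exists_mem_dualC_ne_zero_forall_inner_eq_zero hconv hcone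
    (interior_nonempty_of_span_eq_top hconv hcone ⟨w, hwK⟩ hfull) hGK
  obtain ⟨d, -, rfl⟩ : u ∈ {u | ∃ c : ℝ, 0 ≤ c ∧ u = c • v} :=
    hray ▸ ⟨huK, huG w (hFG hwF)⟩
  obtain ⟨c, -, rfl⟩ := hx
  have hd : d ≠ 0 := by
    rintro rfl
    simp at hu0
  refine Set.Subset.antisymm (fun g hg => ⟨hG.2.1 hg, ?_⟩) hFG
  have hvg : d * ⟪g, v⟫ = 0 := by rw [← real_inner_smul_right, huG g hg]
  rw [real_inner_smul_left, real_inner_comm, (mul_eq_zero.mp hvg).resolve_left hd, mul_zero]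

/-- If `K` is a proper cone in a finite-dimensional real inner product space,
`v ∈ K* \ {0}` generates an exposed ray of the dual cone `K*` and
`x ∈ ℝ₊ v`, `x ≠ 0`, then `F := K ∩ x^⊥ = {y ∈ K : ⟪x, y⟫ = 0}` is a maximal
face of `K`. -/
theorem maximal_face_from_exposed_ray [FiniteDimensional ℝ E]
    (K : Set E) (hclosed : IsClosed K) (hconv : Convex ℝ K)
    (hcone : ∀ x ∈ K, ∀ c : ℝ, 0 < c → c • x ∈ K)
    (hpointed : ∀ x ∈ K, -x ∈ K → x = 0)
    (hfull : Submodule.span ℝ K = ⊤)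
    (v : E) (hv : v ∈ dualC K) (hv0 : v ≠ 0)
    (hexp : ∃ w ∈ K, dualC K ∩ {u | (inner ℝ w u : ℝ) = 0} =
      {u | ∃ c : ℝ, 0 ≤ c ∧ u = c • v})
    (x : E) (hx : ∃ c : ℝ, 0 ≤ c ∧ x = c • v) (hx0 : x ≠ 0) :
    IsMaximalFaceOf K {y ∈ K | (inner ℝ x y : ℝ) = 0} :=
  maximal_face_from_exposed_ray_general K hconv hcone hfull v hexp x hx hx0
end

section
/- A nonzero matrix X belongs to the dual cone of the copositive cone COP(n) (with respect to the trace inner product on symmetric matrices) if and only if X belongs to the completely positive cone CP(n) = cone{xxᵀ : x ∈ ℝⁿ₊}; that is, CP(n)* = COP(n) and COP(n)* = CP(n). -/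
open Matrix

/-- The copositive cone `COP(n)` (inside the symmetric matrices). -/
def COPset (n : ℕ) : Set (Matrix (Fin n) (Fin n) ℝ) :=
  {A | A.IsSymm ∧ ∀ t : Fin n → ℝ, (∀ i, 0 ≤ t i) → 0 ≤ t ⬝ᵥ A.mulVec t}

/-- The completely positive cone `CP(n) = cone{xxᵀ : x ∈ ℝⁿ₊}`. -/
def CPset (n : ℕ) : Set (Matrix (Fin n) (Fin n) ℝ) :=
  {X | ∃ (m : ℕ) (c : Fin m → ℝ) (v : Fin m → Fin n → ℝ),
    (∀ k, 0 ≤ c k) ∧ (∀ k i, 0 ≤ v k i) ∧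
    X = ∑ k, c k • Matrix.vecMulVec (v k) (v k)}

/-- The dual cone with respect to the trace inner product, taken inside the
space of symmetric matrices. -/
def traceDual (n : ℕ) (K : Set (Matrix (Fin n) (Fin n) ℝ)) :
    Set (Matrix (Fin n) (Fin n) ℝ) :=
  {U | U.IsSymm ∧ ∀ X ∈ K, 0 ≤ (X * U).trace}

/-!
`CP(n)` is the convex hull of the cone `{v vᵀ : v ≥ 0}`, so by Carathéodory's theorem it is the
image of the nonnegative orthant of `(ℝⁿ)^(n²+1)` under `v ↦ ∑ₖ vₖ vₖᵀ`. That map is proper, its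
trace being `‖v‖²`, so `CP(n)` is closed. Since `tᵀ A t = ⟨t tᵀ, A⟩`, copositivity of `A` says
exactly that `A` is nonnegative on the generators of `CP(n)`; this gives `CP(n)* = COP(n)` and
`CP(n) ⊆ COP(n)*`. A matrix of `COP(n)*` outside the closed cone `CP(n)` would be separated from
it by a linear functional; that functional is the trace pairing with a symmetric matrix, which is
then copositive, a contradiction.
-/

section Caratheodory

variable {E : Type*} [AddCommGroup E] [Module ℝ E] {s : Set E}

theorem sum_mem_convexHull_of_smul_mem (h0 : (0 : E) ∈ s)
    (hs : ∀ ⦃c : ℝ⦄, 0 ≤ c → ∀ ⦃x⦄, x ∈ s → c • x ∈ s) {m : ℕ} {g : Fin m → E} (hg : ∀ k, g k ∈ s) :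
    ∑ k, g k ∈ convexHull ℝ s := by
  rcases Nat.eq_zero_or_pos m with rfl | hm
  · simpa using subset_convexHull ℝ s h0
  have hm' : (m : ℝ) ≠ 0 := by positivity
  have key := (convex_convexHull ℝ s).sum_mem (t := Finset.univ) (w := fun _ => (m : ℝ)⁻¹)
    (z := fun k => (m : ℝ) • g k) (fun _ _ => by positivity) (by simp [hm'])
    (fun k _ => subset_convexHull ℝ s (hs m.cast_nonneg (hg k)))
  simpa [smul_smul, inv_mul_cancel₀ hm'] using key

/-- Carathéodory's theorem, with the weights absorbed into the points of the cone `s`. -/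
theorem exists_sum_eq_of_mem_convexHull [FiniteDimensional ℝ E] (h0 : (0 : E) ∈ s)
    (hs : ∀ ⦃c : ℝ⦄, 0 ≤ c → ∀ ⦃x⦄, x ∈ s → c • x ∈ s) {x : E} (hx : x ∈ convexHull ℝ s) :
    ∃ g : Fin (Module.finrank ℝ E + 1) → E, (∀ k, g k ∈ s) ∧ ∑ k, g k = x := by
  obtain ⟨ι, _, z, w, hzs, hz, hw, -, rfl⟩ := eq_pos_convex_span_of_mem_convexHull hx
  have hcard : Fintype.card ι ≤ Fintype.card (Fin (Module.finrank ℝ E + 1)) := by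
    simpa using hz.card_le_finrank_succ.trans (Nat.succ_le_succ (Submodule.finrank_le _))
  obtain ⟨e⟩ := Function.Embedding.nonempty_of_card_le hcard
  refine ⟨Function.extend e (fun i => w i • z i) 0, fun k => ?_, ?_⟩
  · by_cases hk : ∃ i, e i = k
    · obtain ⟨i, rfl⟩ := hk
      rw [e.injective.extend_apply]
      exact hs (hw i).le (hzs ⟨i, rfl⟩)
    · rw [Function.extend_apply' _ _ _ hk]
      exact h0
  · refine (Fintype.sum_of_injective e e.injective _ _ (fun k hk => ?_) fun i => ?_).symm
    · exact Function.extend_apply' _ _ _ (by simpa using hk)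
    · exact (e.injective.extend_apply (fun i => w i • z i) 0 i).symm

end Caratheodory

namespace Matrix

instance {m n : Type*} : LocallyConvexSpace ℝ (Matrix m n ℝ) :=
  inferInstanceAs (LocallyConvexSpace ℝ (m → n → ℝ))

instance {m n : Type*} [Finite m] [Finite n] : LocallyCompactSpace (Matrix m n ℝ) :=
  inferInstanceAs (LocallyCompactSpace (m → n → ℝ))

theorem isSymm_vecMulVec_self {n R : Type*} [CommMagma R] (v : n → R) :
    (vecMulVec v v).IsSymm :=
  transpose_vecMulVec v v

variable {n R : Type*} [Fintype n]

theorem trace_vecMulVec_self_mul [CommSemiring R] (v : n → R) (A : Matrix n n R) :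
    (vecMulVec v v * A).trace = v ⬝ᵥ A *ᵥ v := by
  rw [vecMulVec_mul, trace_vecMulVec, dotProduct_comm, dotProduct_mulVec]

theorem exists_trace_mul_eq [DecidableEq n] [CommSemiring R] (f : Matrix n n R →ₗ[R] R) :
    ∃ A : Matrix n n R, ∀ Y, f Y = (Y * A).trace := by
  refine ⟨of fun j i => f (single i j 1), fun Y => ?_⟩
  have hsingle : ∀ i j, f (single i j (Y i j)) = Y i j * f (single i j 1) := fun i j => by
    rw [← smul_eq_mul, ← map_smul, smul_single, smul_eq_mul, mul_one]
  conv_lhs => rw [matrix_eq_sum_single Y]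
  simp only [map_sum, hsingle, trace, diag, mul_apply, of_apply]

theorem exists_isSymm_trace_mul_eq [DecidableEq n] (f : Matrix n n ℝ →ₗ[ℝ] ℝ) :
    ∃ B : Matrix n n ℝ, B.IsSymm ∧ ∀ Y, Y.IsSymm → f Y = (Y * B).trace := by
  obtain ⟨A, hA⟩ := exists_trace_mul_eq f
  refine ⟨(2⁻¹ : ℝ) • (A + Aᵀ), ?_, fun Y hY => ?_⟩
  · simp [IsSymm, add_comm]
  · have : (Y * Aᵀ).trace = (Y * A).trace := by
      rw [← trace_transpose, transpose_mul, transpose_transpose, hY.eq, trace_mul_comm]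
    rw [Matrix.mul_smul, mul_add, trace_smul, trace_add, this, ← hA]
    simp only [smul_eq_mul]
    ring

end Matrix

section CompletelyPositive

open Module

def sumOuter {ι m : Type*} [Fintype ι] (v : ι → m → ℝ) : Matrix m m ℝ :=
  ∑ k, vecMulVec (v k) (v k)

theorem trace_sumOuter {ι m : Type*} [Fintype ι] [Fintype m] (v : ι → m → ℝ) :
    (sumOuter v).trace = ∑ k, ∑ i, v k i ^ 2 := by
  simp [sumOuter, trace_sum, trace_vecMulVec, dotProduct, sq]

theorem isProperMap_sumOuter {ι m : Type*} [Fintype ι] [Fintype m] :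
    IsProperMap (sumOuter : (ι → m → ℝ) → Matrix m m ℝ) := by
  have hcont : Continuous (sumOuter : (ι → m → ℝ) → Matrix m m ℝ) :=
    continuous_finsetSum _ fun k _ => (continuous_apply k).matrix_vecMulVec (continuous_apply k)
  refine isProperMap_iff_isCompact_preimage.2 ⟨hcont, fun K hK => ?_⟩
  obtain ⟨B, hB⟩ := (hK.image continuous_id.matrix_trace).bddAbove
  have hbox : IsCompact (Set.univ.pi fun _ : ι => Set.univ.pi fun _ : m => Set.Icc (-√B) √B) :=
    isCompact_univ_pi fun _ => isCompact_univ_pi fun _ => isCompact_Icc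
  refine hbox.of_isClosed_subset (hK.isClosed.preimage hcont) fun v hv => ?_
  simp only [Set.mem_univ_pi]
  intro k i
  have hsq : v k i ^ 2 ≤ B := calc
    v k i ^ 2 ≤ ∑ i, v k i ^ 2 :=
      Finset.single_le_sum (fun i _ => sq_nonneg (v k i)) (Finset.mem_univ i)
    _ ≤ ∑ k, ∑ i, v k i ^ 2 :=
      Finset.single_le_sum (f := fun k => ∑ i, v k i ^ 2) (fun k _ => by positivity)
        (Finset.mem_univ k)
    _ = (sumOuter v).trace := (trace_sumOuter v).symm
    _ ≤ B := hB ⟨_, hv, rfl⟩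
  exact abs_le.1 (Real.abs_le_sqrt hsq)

theorem isClosed_sumOuter_image_nonneg {ι m : Type*} [Fintype ι] [Fintype m] :
    IsClosed (sumOuter '' {v : ι → m → ℝ | ∀ k i, 0 ≤ v k i}) := by
  refine isProperMap_sumOuter.isClosedMap _ ?_
  simp only [Set.ofPred_forall]
  exact isClosed_iInter fun k => isClosed_iInter fun i =>
    isClosed_le continuous_const ((continuous_apply i).comp (continuous_apply k))

variable {n : ℕ}

def nonnegRankOne (n : ℕ) : Set (Matrix (Fin n) (Fin n) ℝ) :=
  (fun v => vecMulVec v v) '' {v | ∀ i, 0 ≤ v i}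

theorem zero_mem_nonnegRankOne : (0 : Matrix (Fin n) (Fin n) ℝ) ∈ nonnegRankOne n :=
  ⟨0, fun _ => le_rfl, zero_vecMulVec 0⟩

theorem smul_mem_nonnegRankOne ⦃c : ℝ⦄ (hc : 0 ≤ c) ⦃X : Matrix (Fin n) (Fin n) ℝ⦄
    (hX : X ∈ nonnegRankOne n) : c • X ∈ nonnegRankOne n := by
  obtain ⟨v, hv, rfl⟩ := hX
  refine ⟨√c • v, fun i => mul_nonneg (Real.sqrt_nonneg c) (hv i), ?_⟩
  simp only [smul_vecMulVec, vecMulVec_smul, smul_smul, Real.mul_self_sqrt hc]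

theorem CPset_subset_convexHull : CPset n ⊆ convexHull ℝ (nonnegRankOne n) := by
  rintro _ ⟨m, c, v, hc, hv, rfl⟩
  refine sum_mem_convexHull_of_smul_mem zero_mem_nonnegRankOne
    smul_mem_nonnegRankOne fun k => ?_
  exact smul_mem_nonnegRankOne (hc k) ⟨v k, hv k, rfl⟩

theorem convexHull_subset_sumOuter_image :
    convexHull ℝ (nonnegRankOne n) ⊆
      sumOuter '' {v : Fin (finrank ℝ (Matrix (Fin n) (Fin n) ℝ) + 1) → Fin n → ℝ |
        ∀ k i, 0 ≤ v k i} := by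
  intro X hX
  obtain ⟨g, hg, rfl⟩ := exists_sum_eq_of_mem_convexHull zero_mem_nonnegRankOne
    smul_mem_nonnegRankOne hX
  choose v hv hvg using hg
  exact ⟨v, hv, by simp only [sumOuter, hvg]⟩

theorem sumOuter_mem_CPset {m : ℕ} {v : Fin m → Fin n → ℝ} (hv : ∀ k i, 0 ≤ v k i) :
    sumOuter v ∈ CPset n :=
  ⟨m, 1, v, fun _ => zero_le_one, hv, by simp [sumOuter]⟩

theorem CPset_eq_sumOuter_image :
    CPset n = sumOuter '' {v : Fin (finrank ℝ (Matrix (Fin n) (Fin n) ℝ) + 1) → Fin n → ℝ |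
      ∀ k i, 0 ≤ v k i} :=
  (CPset_subset_convexHull.trans convexHull_subset_sumOuter_image).antisymm
    fun _ ⟨_, hv, hX⟩ => hX ▸ sumOuter_mem_CPset hv

theorem CPset_eq_convexHull : CPset n = convexHull ℝ (nonnegRankOne n) :=
  CPset_subset_convexHull.antisymm
    (convexHull_subset_sumOuter_image.trans CPset_eq_sumOuter_image.symm.subset)

theorem convex_CPset : Convex ℝ (CPset n) :=
  CPset_eq_convexHull ▸ convex_convexHull ℝ _

theorem vecMulVec_mem_CPset {t : Fin n → ℝ} (ht : ∀ i, 0 ≤ t i) : vecMulVec t t ∈ CPset n :=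
  CPset_eq_convexHull ▸ subset_convexHull ℝ _ ⟨t, ht, rfl⟩

theorem isClosed_CPset : IsClosed (CPset n) :=
  CPset_eq_sumOuter_image ▸ isClosed_sumOuter_image_nonneg

theorem smul_mem_CPset {c : ℝ} (hc : 0 ≤ c) {X : Matrix (Fin n) (Fin n) ℝ} (hX : X ∈ CPset n) :
    c • X ∈ CPset n := by
  obtain ⟨m, d, v, hd, hv, rfl⟩ := hX
  exact ⟨m, fun k => c * d k, v, fun k => mul_nonneg hc (hd k), hv, by
    simp only [Finset.smul_sum, smul_smul]⟩

theorem add_mem_CPset {X Y : Matrix (Fin n) (Fin n) ℝ} (hX : X ∈ CPset n) (hY : Y ∈ CPset n) :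
    X + Y ∈ CPset n := by
  have hmid := convex_CPset hX hY (by norm_num : (0 : ℝ) ≤ 2⁻¹) (by norm_num : (0 : ℝ) ≤ 2⁻¹)
    (by norm_num)
  convert smul_mem_CPset zero_le_two hmid using 1
  simp only [smul_add, smul_smul]
  norm_num

theorem zero_mem_CPset : (0 : Matrix (Fin n) (Fin n) ℝ) ∈ CPset n :=
  ⟨0, 0, 0, fun _ => le_rfl, fun _ _ => le_rfl, by simp⟩

def cpCone (n : ℕ) : ProperCone ℝ (Matrix (Fin n) (Fin n) ℝ) where
  carrier := CPset n
  add_mem' := add_mem_CPset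
  zero_mem' := zero_mem_CPset
  smul_mem' c _ hX := smul_mem_CPset c.2 hX
  isClosed' := isClosed_CPset

theorem isSymm_of_mem_CPset {X : Matrix (Fin n) (Fin n) ℝ} (hX : X ∈ CPset n) : X.IsSymm := by
  obtain ⟨m, c, v, -, -, rfl⟩ := hX
  simp only [IsSymm, transpose_sum, transpose_smul, transpose_vecMulVec]

theorem trace_mul_nonneg_of_mem_CPset {X A : Matrix (Fin n) (Fin n) ℝ} (hX : X ∈ CPset n)
    (hA : ∀ t : Fin n → ℝ, (∀ i, 0 ≤ t i) → 0 ≤ t ⬝ᵥ A *ᵥ t) : 0 ≤ (X * A).trace := by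
  obtain ⟨m, c, v, hc, hv, rfl⟩ := hX
  simp only [Finset.sum_mul, smul_mul, trace_sum, trace_smul, trace_vecMulVec_self_mul,
    smul_eq_mul]
  exact Finset.sum_nonneg fun k _ => mul_nonneg (hc k) (hA _ (hv k))

end CompletelyPositive

section Duality

variable {n : ℕ}

theorem traceDual_COPset_subset : traceDual n (COPset n) ⊆ CPset n := by
  rintro U ⟨hU, hUdual⟩
  by_contra hUcp
  obtain ⟨f, hf, hfU⟩ := (cpCone n).hyperplane_separation_point hUcp
  obtain ⟨B, hB, hfB⟩ := exists_isSymm_trace_mul_eq (f : Matrix (Fin n) (Fin n) ℝ →ₗ[ℝ] ℝ)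
  have hBcop : B ∈ COPset n := ⟨hB, fun t ht => by
    rw [← trace_vecMulVec_self_mul, ← hfB _ (isSymm_vecMulVec_self t)]
    exact hf _ (vecMulVec_mem_CPset ht)⟩
  have hUB := hUdual B hBcop
  rw [trace_mul_comm, ← hfB U hU] at hUB
  exact hUB.not_gt hfU

theorem CPset_subset_traceDual_COPset : CPset n ⊆ traceDual n (COPset n) := fun X hX =>
  ⟨isSymm_of_mem_CPset hX, fun A hA => trace_mul_comm A X ▸ trace_mul_nonneg_of_mem_CPset hX hA.2⟩

theorem traceDual_CPset_subset : traceDual n (CPset n) ⊆ COPset n := fun U ⟨hU, hUdual⟩ =>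
  ⟨hU, fun t ht => trace_vecMulVec_self_mul t U ▸ hUdual _ (vecMulVec_mem_CPset ht)⟩

theorem COPset_subset_traceDual_CPset : COPset n ⊆ traceDual n (CPset n) := fun _ ⟨hA, hAcop⟩ =>
  ⟨hA, fun _ hX => trace_mul_nonneg_of_mem_CPset hX hAcop⟩

end Duality

/-- With respect to the trace inner product on symmetric matrices, the dual of
the copositive cone is the completely positive cone and vice versa:
`COP(n)* = CP(n)` and `CP(n)* = COP(n)`. -/
theorem cop_cp_duality (n : ℕ) :
    traceDual n (COPset n) = CPset n ∧ traceDual n (CPset n) = COPset n :=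
  ⟨traceDual_COPset_subset.antisymm CPset_subset_traceDual_COPset,
    traceDual_CPset_subset.antisymm COPset_subset_traceDual_CPset⟩
end

section
/- Let A ∈ COP(n) be extremal with a finite zero set consisting of normalized minimal zeros τʲ, j ∈ J, let I ⊆ [n] be nonempty with J₀ := {j ∈ J : I ⊆ supp(τʲ)}, and suppose ⋃_{j∈J₀} M(j) = [n] where M(j) = [n] \ supp(Aτʲ). Then the bordered matrix B = [[A, Ae*],[e*ᵀA, e*ᵀAe*]] (with e* = ∑_{i∈I}eᵢ) is an extremal matrix of COP(n+1): whenever B = D̄ + C̄ with D̄, C̄ ∈ COP(n+1), there exists α ∈ [0,1] with D̄ = αB and C̄ = (1−α)B. -/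
open Matrix

/-- A normalized zero of `A`: a nonnegative vector with `‖τ‖₁ = 1` and
`τᵀ A τ = 0`. -/
def NZero {n : ℕ} (A : Matrix (Fin n) (Fin n) ℝ) (τ : Fin n → ℝ) : Prop :=
  (∀ i, 0 ≤ τ i) ∧ (∑ i, τ i) = 1 ∧ τ ⬝ᵥ A.mulVec τ = 0

/- ## Auxiliary lemmas -/

lemma dot_mulVec_symm {n : ℕ} {X : Matrix (Fin n) (Fin n) ℝ} (hX : X.IsSymm) (u v : Fin n → ℝ) :
    u ⬝ᵥ X.mulVec v = v ⬝ᵥ X.mulVec u := by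
  rw [Matrix.dotProduct_mulVec, ← hX, Matrix.vecMul_transpose, dotProduct_comm, hX]

lemma single_dot {n : ℕ} (k : Fin n) (y : Fin n → ℝ) :
    (Pi.single k 1 : Fin n → ℝ) ⬝ᵥ y = y k := by
  simp [dotProduct, Pi.single_apply]

lemma cop_grad_nonneg {n : ℕ} {X : Matrix (Fin n) (Fin n) ℝ} (hX : Copositive X)
    {u : Fin n → ℝ} (hu : ∀ i, 0 ≤ u i) (huz : u ⬝ᵥ X.mulVec u = 0) (k : Fin n) :
    0 ≤ X.mulVec u k := by
  by_contra hc
  push_neg at hc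
  set c := X.mulVec u k with hcdef
  set s : ℝ := min 1 (-c / (|X k k| + 1)) with hs
  have habs : 0 < |X k k| + 1 := by positivity
  have hspos : 0 < s := by
    apply lt_min one_pos
    apply div_pos (by linarith) habs
  have hs1 : s ≤ -c / (|X k k| + 1) := min_le_right _ _
  have hv : ∀ i, 0 ≤ u i + s * (Pi.single k 1 : Fin n → ℝ) i := by
    intro i
    have := hu i
    rcases eq_or_ne i k with h | h
    · subst h; simp; nlinarith
    · simp [Pi.single_apply, h]; linarith
  have hq := hX.2 (fun i => u i + s * (Pi.single k 1 : Fin n → ℝ) i) hv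
  have hexp : (fun i => u i + s * (Pi.single k 1 : Fin n → ℝ) i) ⬝ᵥ
        X.mulVec (fun i => u i + s * (Pi.single k 1 : Fin n → ℝ) i)
      = u ⬝ᵥ X.mulVec u + s * (u ⬝ᵥ X.mulVec (Pi.single k 1))
        + s * ((Pi.single k 1 : Fin n → ℝ) ⬝ᵥ X.mulVec u)
        + s * s * ((Pi.single k 1 : Fin n → ℝ) ⬝ᵥ X.mulVec (Pi.single k 1)) := by
    have h1 : (fun i => u i + s * (Pi.single k 1 : Fin n → ℝ) i)
        = u + s • (Pi.single k 1 : Fin n → ℝ) := by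
      funext i; simp [Pi.smul_apply, smul_eq_mul]
    rw [h1]
    simp [Matrix.mulVec_add, Matrix.mulVec_smul, dotProduct_add, add_dotProduct,
      dotProduct_smul, smul_dotProduct, smul_eq_mul]
    ring
  rw [hexp, huz, dot_mulVec_symm hX.1 u (Pi.single k 1), single_dot, single_dot] at hq
  have hXuk : X.mulVec (Pi.single k 1) k = X k k := by
    simp [Matrix.mulVec_single]
  rw [hXuk] at hq
  have hsm : s * X k k ≤ -c := by
    calc s * X k k ≤ s * |X k k| := by nlinarith [le_abs_self (X k k)]
    _ ≤ (-c / (|X k k| + 1)) * |X k k| := by nlinarith [abs_nonneg (X k k)]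
    _ ≤ -c := by
        rw [div_mul_eq_mul_div, div_le_iff₀ habs]
        nlinarith [abs_nonneg (X k k)]
  nlinarith

lemma cop_grad_zero {n : ℕ} {X : Matrix (Fin n) (Fin n) ℝ} (hX : Copositive X)
    {u : Fin n → ℝ} (hu : ∀ i, 0 ≤ u i) (huz : u ⬝ᵥ X.mulVec u = 0) {k : Fin n}
    (hk : u k ≠ 0) : X.mulVec u k = 0 := by
  have hnn := cop_grad_nonneg hX hu huz
  have hsum : ∑ i, u i * X.mulVec u i = 0 := huz
  have := (Finset.sum_eq_zero_iff_of_nonneg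
    (fun i _ => mul_nonneg (hu i) (hnn i))).mp hsum k (Finset.mem_univ k)
  rcases mul_eq_zero.mp this with h | h
  · exact absurd h hk
  · exact h

lemma extVec_castSucc {n : ℕ} (a : Fin n → ℝ) (i : Fin n) :
    extVec a (Fin.castSucc i) = Pi.single i 1 := by simp [extVec]

lemma extVec_last {n : ℕ} (a : Fin n → ℝ) : extVec a (Fin.last n) = a := by simp [extVec]

/-- The `n × (n+1)` matrix whose columns are `e₀, …, e_{n-1}, a`. -/
def Pmat {n : ℕ} (a : Fin n → ℝ) : Matrix (Fin n) (Fin (n + 1)) ℝ :=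
  Matrix.of fun i k => extVec a k i

lemma Pmat_mulVec {n : ℕ} (a : Fin n → ℝ) (w : Fin (n + 1) → ℝ) :
    (Pmat a).mulVec w = fun i => w (Fin.castSucc i) + w (Fin.last n) * a i := by
  funext i
  simp only [Pmat, Matrix.mulVec, dotProduct, Matrix.of_apply]
  rw [Fin.sum_univ_castSucc]
  simp [extVec_castSucc, extVec_last, Pi.single_apply]
  ring

lemma border_fact {n : ℕ} (A : Matrix (Fin n) (Fin n) ℝ) (a : Fin n → ℝ) :
    border A a = (Pmat a)ᵀ * A * (Pmat a) := by
  ext k l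
  simp only [border, Matrix.of_apply, Matrix.mul_apply, Matrix.transpose_apply, Pmat,
    Matrix.mulVec, dotProduct]
  simp only [Finset.mul_sum, Finset.sum_mul]
  rw [Finset.sum_comm]
  apply Finset.sum_congr rfl
  intro i _
  apply Finset.sum_congr rfl
  intro j _
  ring

lemma border_quad {n : ℕ} (A : Matrix (Fin n) (Fin n) ℝ) (a : Fin n → ℝ)
    (u v : Fin (n + 1) → ℝ) :
    u ⬝ᵥ (border A a).mulVec v = ((Pmat a).mulVec u) ⬝ᵥ A.mulVec ((Pmat a).mulVec v) := by
  rw [border_fact, ← Matrix.mulVec_mulVec, ← Matrix.mulVec_mulVec,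
    Matrix.dotProduct_mulVec, Matrix.vecMul_transpose]

lemma border_mulVec_apply {n : ℕ} (A : Matrix (Fin n) (Fin n) ℝ) (a : Fin n → ℝ)
    (v : Fin (n + 1) → ℝ) (m : Fin (n + 1)) :
    (border A a).mulVec v m = extVec a m ⬝ᵥ A.mulVec ((Pmat a).mulVec v) := by
  rw [border_fact, ← Matrix.mulVec_mulVec, ← Matrix.mulVec_mulVec]
  simp [Matrix.mulVec, dotProduct, Pmat]

lemma snoc_quad_s14 {n : ℕ} (X : Matrix (Fin (n + 1)) (Fin (n + 1)) ℝ) (t : Fin n → ℝ) :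
    (Fin.snoc t 0 : Fin (n + 1) → ℝ) ⬝ᵥ X.mulVec (Fin.snoc t 0) =
      t ⬝ᵥ (X.submatrix Fin.castSucc Fin.castSucc).mulVec t := by
  simp [dotProduct, Matrix.mulVec, Fin.sum_univ_castSucc]

lemma sub_copositive {n : ℕ} {X : Matrix (Fin (n + 1)) (Fin (n + 1)) ℝ} (hX : Copositive X) :
    Copositive (X.submatrix Fin.castSucc Fin.castSucc) := by
  constructor
  · unfold Matrix.IsSymm
    rw [Matrix.transpose_submatrix, hX.1]
  · intro t ht
    have hnn : ∀ i : Fin (n + 1), 0 ≤ (Fin.snoc t 0 : Fin (n + 1) → ℝ) i := by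
      intro i
      induction i using Fin.lastCases with
      | last => simp
      | cast i => simp only [Fin.snoc_castSucc]; exact ht i
    have := hX.2 (Fin.snoc t 0) hnn
    rwa [snoc_quad_s14] at this

lemma mulVec_snoc {n : ℕ} (X : Matrix (Fin (n + 1)) (Fin (n + 1)) ℝ) (v : Fin n → ℝ)
    (c : ℝ) (m : Fin (n + 1)) :
    X.mulVec (Fin.snoc v c) m
      = (∑ l : Fin n, X m (Fin.castSucc l) * v l) + X m (Fin.last n) * c := by
  simp [Matrix.mulVec, dotProduct, Fin.sum_univ_castSucc]

lemma border_block {n : ℕ} (A : Matrix (Fin n) (Fin n) ℝ) (a : Fin n → ℝ) (i j : Fin n) :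
    border A a (Fin.castSucc i) (Fin.castSucc j) = A i j := by
  simp [border, extVec_castSucc, single_dot, Matrix.mulVec_single]

lemma border_col {n : ℕ} (A : Matrix (Fin n) (Fin n) ℝ) (a : Fin n → ℝ) (k : Fin n) :
    border A a (Fin.castSucc k) (Fin.last n) = A.mulVec a k := by
  simp [border, extVec_castSucc, extVec_last, single_dot]

lemma border_row {n : ℕ} {A : Matrix (Fin n) (Fin n) ℝ} (hA : A.IsSymm) (a : Fin n → ℝ)
    (k : Fin n) : border A a (Fin.last n) (Fin.castSucc k) = A.mulVec a k := by
  simp only [border, Matrix.of_apply, extVec_castSucc, extVec_last]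
  rw [dot_mulVec_symm hA, single_dot]

lemma border_corner {n : ℕ} (A : Matrix (Fin n) (Fin n) ℝ) (a : Fin n → ℝ) :
    border A a (Fin.last n) (Fin.last n) = a ⬝ᵥ A.mulVec a := by
  simp [border, extVec_last]

/-- Let `A ∈ COP(n)` be extremal, with finite zero set consisting of the
normalized minimal zeros `τʲ, j ∈ J`; let `I ⊆ [n]` be nonempty, and suppose
`⋃_{j ∈ J₀} M(j) = [n]`, where `J₀ = {j : I ⊆ supp(τʲ)}` and
`M(j) = [n] \ supp(Aτʲ)`.  Then the bordered matrix
`B = [[A, A e*],[e*ᵀ A, e*ᵀ A e*]]` is an extremal matrix of `COP(n+1)`: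
any decomposition `B = D + C` with `D, C ∈ COP(n+1)` has `D = α B`,
`C = (1 − α) B` for some `α ∈ [0, 1]`. -/
theorem border_extremal {n : ℕ} (A : Matrix (Fin n) (Fin n) ℝ)
    (hA : Copositive A)
    (hAext : ∀ D C : Matrix (Fin n) (Fin n) ℝ, Copositive D → Copositive C →
      A = D + C → ∃ α : ℝ, 0 ≤ α ∧ α ≤ 1 ∧ D = α • A)
    (J : Type) [Fintype J] (τ : J → Fin n → ℝ)
    (hz : ∀ j, NZero A (τ j))
    (hmin : ∀ (j : J) (σ : Fin n → ℝ), NZero A σ →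
      ¬ ({i | σ i ≠ 0} ⊂ {i | τ j i ≠ 0}))
    (hall : ∀ σ : Fin n → ℝ, NZero A σ → ∃ j, σ = τ j)
    (I : Finset (Fin n)) (hI : I.Nonempty)
    (hcover : ∀ k : Fin n, ∃ j, (∀ i ∈ I, τ j i ≠ 0) ∧ A.mulVec (τ j) k = 0) :
    ∀ D C : Matrix (Fin (n + 1)) (Fin (n + 1)) ℝ, Copositive D → Copositive C →
      border A (indic I) = D + C →
      ∃ α : ℝ, 0 ≤ α ∧ α ≤ 1 ∧ D = α • border A (indic I) ∧
        C = (1 - α) • border A (indic I) := by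
  intro D C hD hC hBD
  set a := indic I with ha_def
  have hDsym : ∀ p q, D p q = D q p := by
    intro p q
    have h := congrFun (congrFun hD.1 q) p
    simpa using h
  -- the top-left blocks of D and C decompose A
  have hsumA : A = D.submatrix Fin.castSucc Fin.castSucc
      + C.submatrix Fin.castSucc Fin.castSucc := by
    ext i j
    have h := congrFun (congrFun hBD (Fin.castSucc i)) (Fin.castSucc j)
    rw [border_block] at h
    simpa using h
  obtain ⟨α, hα0, hα1, hDα⟩ := hAext _ _ (sub_copositive hD) (sub_copositive hC) hsumA
  have hDblock : ∀ i j, D (Fin.castSucc i) (Fin.castSucc j) = α * A i j := by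
    intro i j
    have h := congrFun (congrFun hDα i) j
    simpa using h
  -- a ⬝ᵥ A τj = 0 whenever I ⊆ supp(τj)
  have haAτ : ∀ j : J, (∀ i ∈ I, τ j i ≠ 0) → a ⬝ᵥ A.mulVec (τ j) = 0 := by
    intro j hj
    apply Finset.sum_eq_zero
    intro i _
    by_cases hiI : i ∈ I
    · rw [cop_grad_zero hA (hz j).1 (hz j).2.2 (hj i hiI)]; ring
    · simp [ha_def, indic, hiI]
  -- the key vanishing facts for D along the zero w of B built from τj
  have key : ∀ j : J, (∀ i ∈ I, τ j i ≠ 0) → ∃ δ : ℝ, 0 < δ ∧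
      (∀ k : Fin n, A.mulVec (τ j) k = 0 →
        D.mulVec (Fin.snoc (fun i => τ j i - δ * a i) δ) (Fin.castSucc k) = 0) ∧
      D.mulVec (Fin.snoc (fun i => τ j i - δ * a i) δ) (Fin.last n) = 0 := by
    intro j hj
    set δ := I.inf' hI (τ j) with hδ
    have hδpos : 0 < δ := by
      rw [hδ, Finset.lt_inf'_iff]
      intro i hi
      exact lt_of_le_of_ne ((hz j).1 i) (Ne.symm (hj i hi))
    set w : Fin (n + 1) → ℝ := Fin.snoc (fun i => τ j i - δ * a i) δ with hw
    have hw_nonneg : ∀ m, 0 ≤ w m := by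
      intro m
      induction m using Fin.lastCases with
      | last => rw [hw]; simpa using hδpos.le
      | cast i =>
        rw [hw]; simp only [Fin.snoc_castSucc]
        by_cases hiI : i ∈ I
        · have h1 : δ ≤ τ j i := Finset.inf'_le _ hiI
          simp only [ha_def, indic, hiI, if_pos]
          linarith
        · simp only [ha_def, indic, hiI, if_neg, not_false_iff, mul_zero, sub_zero]
          exact (hz j).1 i
    have hPw : (Pmat a).mulVec w = τ j := by
      rw [Pmat_mulVec]
      funext i
      rw [hw]
      simp only [Fin.snoc_castSucc, Fin.snoc_last]
      ring
    have hwB : w ⬝ᵥ (border A a).mulVec w = 0 := by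
      rw [border_quad, hPw]; exact (hz j).2.2
    have hsplit : w ⬝ᵥ D.mulVec w + w ⬝ᵥ C.mulVec w = 0 := by
      rw [← hwB, hBD]
      simp [Matrix.add_mulVec, dotProduct_add]
    have hDq : w ⬝ᵥ D.mulVec w = 0 := by
      have h1 := hD.2 w hw_nonneg
      have h2 := hC.2 w hw_nonneg
      linarith
    have hCq : w ⬝ᵥ C.mulVec w = 0 := by
      have h1 := hD.2 w hw_nonneg
      linarith
    have hgen : ∀ m : Fin (n + 1), extVec a m ⬝ᵥ A.mulVec (τ j) = 0 → D.mulVec w m = 0 := by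
      intro m hm
      have hDg := cop_grad_nonneg hD hw_nonneg hDq m
      have hCg := cop_grad_nonneg hC hw_nonneg hCq m
      have hsum : D.mulVec w m + C.mulVec w m = (border A a).mulVec w m := by
        rw [hBD]; simp [Matrix.add_mulVec]
      rw [border_mulVec_apply, hPw, hm] at hsum
      linarith
    refine ⟨δ, hδpos, ?_, ?_⟩
    · intro k hk
      apply hgen
      rw [extVec_castSucc, single_dot, hk]
    · apply hgen
      rw [extVec_last]
      exact haAτ j hj
  -- the border column of D
  have hDcol : ∀ k : Fin n, D (Fin.castSucc k) (Fin.last n) = α * A.mulVec a k := by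
    intro k
    obtain ⟨j, hjI, hjk⟩ := hcover k
    obtain ⟨δ, hδpos, hk0, -⟩ := key j hjI
    have h := hk0 k hjk
    rw [mulVec_snoc] at h
    have hexp : (∑ l, D (Fin.castSucc k) (Fin.castSucc l) * (τ j l - δ * a l))
        = α * (A.mulVec (τ j) k) - δ * (α * A.mulVec a k) := by
      simp only [hDblock]
      have e1 : A.mulVec (τ j) k = ∑ l, A k l * τ j l := rfl
      have e2 : A.mulVec a k = ∑ l, A k l * a l := rfl
      rw [e1, e2, Finset.mul_sum, Finset.mul_sum, Finset.mul_sum, ← Finset.sum_sub_distrib]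
      apply Finset.sum_congr rfl
      intro l _
      ring
    rw [hexp, hjk] at h
    have h2 : δ * (D (Fin.castSucc k) (Fin.last n) - α * A.mulVec a k) = 0 := by
      linear_combination h
    rcases mul_eq_zero.mp h2 with h3 | h3
    · exact absurd h3 (ne_of_gt hδpos)
    · linarith
  -- the corner entry of D
  have hDll : D (Fin.last n) (Fin.last n) = α * (a ⬝ᵥ A.mulVec a) := by
    obtain ⟨i0, hi0⟩ := hI
    obtain ⟨j, hjI, -⟩ := hcover i0
    obtain ⟨δ, hδpos, -, hlast⟩ := key j hjI
    rw [mulVec_snoc] at hlast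
    have hrow : ∀ l, D (Fin.last n) (Fin.castSucc l) = α * A.mulVec a l := by
      intro l
      rw [hDsym]; exact hDcol l
    have hz1 : A.mulVec a ⬝ᵥ τ j = 0 := by
      rw [dotProduct_comm, ← dot_mulVec_symm hA.1]
      exact haAτ j hjI
    have hexp : (∑ l, D (Fin.last n) (Fin.castSucc l) * (τ j l - δ * a l))
        = α * (A.mulVec a ⬝ᵥ τ j) - δ * (α * (A.mulVec a ⬝ᵥ a)) := by
      simp only [hrow]
      have e1 : A.mulVec a ⬝ᵥ τ j = ∑ l, A.mulVec a l * τ j l := rfl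
      have e2 : A.mulVec a ⬝ᵥ a = ∑ l, A.mulVec a l * a l := rfl
      rw [e1, e2, Finset.mul_sum, Finset.mul_sum, Finset.mul_sum, ← Finset.sum_sub_distrib]
      apply Finset.sum_congr rfl
      intro l _
      ring
    rw [hexp, hz1] at hlast
    have hcomm : A.mulVec a ⬝ᵥ a = a ⬝ᵥ A.mulVec a := dotProduct_comm _ _
    rw [hcomm] at hlast
    have h2 : δ * (D (Fin.last n) (Fin.last n) - α * (a ⬝ᵥ A.mulVec a)) = 0 := by
      linear_combination hlast
    rcases mul_eq_zero.mp h2 with h3 | h3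
    · exact absurd h3 (ne_of_gt hδpos)
    · linarith
  have hDeq : D = α • border A a := by
    ext p q
    rw [Matrix.smul_apply, smul_eq_mul]
    induction p using Fin.lastCases with
    | last =>
      induction q using Fin.lastCases with
      | last => rw [hDll, border_corner]
      | cast l =>
        rw [hDsym, hDcol l, border_row hA.1]
    | cast i =>
      induction q using Fin.lastCases with
      | last => rw [hDcol i, border_col]
      | cast l => rw [hDblock, border_block]
  refine ⟨α, hα0, hα1, hDeq, ?_⟩
  have hCeq : C = border A a - D := by
    rw [hBD]; ext p q; simp
  rw [hCeq, hDeq]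
  ext p q
  simp only [Matrix.sub_apply, Matrix.smul_apply, smul_eq_mul]
  ring
end

section
/- For n > 2, every maximal face of the completely positive cone CP(n) has dimension at least n. -/
open Matrix

/-- A face of the cone `CP(n)`: a nonempty convex subcone `F ⊆ CP(n)` such
that `x + y ∈ F` with `x, y ∈ CP(n)` implies `x, y ∈ F`. -/
def IsFaceCP (n : ℕ) (F : Set (Matrix (Fin n) (Fin n) ℝ)) : Prop :=
  F.Nonempty ∧ F ⊆ CPset n ∧ Convex ℝ F ∧
    (∀ c : ℝ, 0 < c → ∀ x ∈ F, c • x ∈ F) ∧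
    ∀ x ∈ CPset n, ∀ y ∈ CPset n, x + y ∈ F → x ∈ F ∧ y ∈ F

/-- A maximal face of `CP(n)`: a proper face not strictly contained in any
other proper face. -/
def IsMaxFaceCP (n : ℕ) (F : Set (Matrix (Fin n) (Fin n) ℝ)) : Prop :=
  IsFaceCP n F ∧ F ≠ CPset n ∧
    ∀ G, IsFaceCP n G → G ≠ CPset n → F ⊆ G → G = F

/-!
Let `S(F) = {v ≥ 0 | v vᵀ ∈ F}`. If `u₁, …, u_d` are linearly independent, so are the matrices
`uₖuₖᵀ`, and for `d ≥ 2` also `(u₁ + u₂)(u₁ + u₂)ᵀ` is independent of them: with `φ₁, φ₂` dual to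
`u₁, u₂`, the functional `X ↦ φ₁ᵀ X φ₂` vanishes on every `uₖuₖᵀ` but not on it.

If `S(F)` spans `ℝⁿ`, this gives `n` independent matrices in `F`. Otherwise some `w ≠ 0` is
orthogonal to `S(F)`, so `F` lies in the proper face `{X ∈ CP(n) | wᵀXw = 0}` and, being maximal,
equals it. If `w` has constant sign, the same applies to a unit vector `eᵢ` with `wᵢ ≠ 0`. For `w`
of mixed sign or `w = eᵢ`, the nonnegative vectors orthogonal to `w` are closed under addition and
span the hyperplane `w^⊥`, of dimension `n - 1 ≥ 2`, which again gives `n` independent matrices.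
-/

open Module Submodule

section LinearAlgebra

lemma exists_linearIndependent_fin_finrank (K : Type*) [Field K] {V : Type*} [AddCommGroup V]
    [Module K V] [FiniteDimensional K V] (T : Set V) :
    ∃ u : Fin (finrank K (span K T)) → V, (∀ i, u i ∈ T) ∧ LinearIndependent K u := by
  obtain ⟨t, htT, hspan, ht⟩ := exists_linearIndependent K T
  have : Fintype t := ht.setFinite.fintype
  have hcard : finrank K (span K T) = Fintype.card t := by
    rw [← hspan, ← finrank_span_eq_card ht, Subtype.range_coe]
  rw [hcard]
  exact ⟨(↑) ∘ (Fintype.equivFin t).symm, fun i => htT (Subtype.prop _),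
    ht.comp _ (Fintype.equivFin t).symm.injective⟩

variable {K : Type*} [Field K]

lemma card_le_finrank_span_of_linearIndependent {V : Type*} [AddCommGroup V] [Module K V]
    [FiniteDimensional K V] {κ : Type*} [Fintype κ] {f : κ → V} {F : Set V}
    (hf : LinearIndependent K f) (hfF : ∀ i, f i ∈ F) :
    Fintype.card κ ≤ finrank K (span K F) := by
  rw [← finrank_span_eq_card hf]
  exact Submodule.finrank_mono (span_mono (Set.range_subset_iff.mpr hfF))

variable {ι : Type*} [Fintype ι]

@[simps]
def dotProductMulVecₗ (x y : ι → K) : Matrix ι ι K →ₗ[K] K where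
  toFun M := x ⬝ᵥ M *ᵥ y
  map_add' M N := by rw [add_mulVec, dotProduct_add]
  map_smul' c M := by rw [smul_mulVec, dotProduct_smul]; rfl

lemma dotProduct_vecMulVec_mulVec (x y u : ι → K) :
    x ⬝ᵥ vecMulVec u u *ᵥ y = (x ⬝ᵥ u) * (u ⬝ᵥ y) := by
  rw [dotProduct_mulVec, vecMul_vecMulVec, smul_dotProduct, smul_eq_mul]

lemma dotProduct_sum_smul_vecMulVec_mulVec {κ : Type*} [Fintype κ] (w : ι → K) (c : κ → K)
    (v : κ → ι → K) :
    w ⬝ᵥ (∑ k, c k • vecMulVec (v k) (v k)) *ᵥ w = ∑ k, c k * (v k ⬝ᵥ w) ^ 2 := by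
  rw [← dotProductMulVecₗ_apply, map_sum]
  refine Finset.sum_congr rfl fun k _ => ?_
  rw [map_smul, dotProductMulVecₗ_apply, dotProduct_vecMulVec_mulVec, dotProduct_comm w,
    smul_eq_mul, sq]

variable [DecidableEq ι]

lemma exists_dotProduct_eq_ite {κ : Type*} [DecidableEq κ] {u : κ → ι → K}
    (hu : LinearIndependent K u) :
    ∃ y : κ → ι → K, ∀ i j, y i ⬝ᵥ u j = if i = j then 1 else 0 := by
  classical
  let b := Basis.extend hu.linearIndepOn_id
  have hmem : ∀ i, u i ∈ hu.linearIndepOn_id.extend (Set.subset_univ _) := fun i =>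
    hu.linearIndepOn_id.subset_extend _ ⟨i, rfl⟩
  refine ⟨fun i => (dotProductEquiv K ι).symm (b.coord ⟨u i, hmem i⟩), fun i j => ?_⟩
  have hj : u j = b ⟨u j, hmem j⟩ :=
    (Basis.extend_apply_self hu.linearIndepOn_id ⟨u j, hmem j⟩).symm
  rw [← dotProductEquiv_apply_apply, LinearEquiv.apply_symm_apply, hj, Basis.coord_apply,
    Basis.repr_self, Finsupp.single_apply]
  simp [hu.injective.eq_iff, eq_comm]

lemma linearIndependent_vecMulVec_self {κ : Type*} {u : κ → ι → K}
    (hu : LinearIndependent K u) : LinearIndependent K fun k => vecMulVec (u k) (u k) := by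
  classical
  obtain ⟨y, hy⟩ := exists_dotProduct_eq_ite hu
  refine linearIndependent_iff'.mpr fun s g hg k hk => ?_
  have := congrArg (dotProductMulVecₗ (y k) (y k)) hg
  simpa [dotProduct_vecMulVec_mulVec, dotProduct_comm _ (y k), hy, hk] using this

lemma linearIndependent_option_vecMulVec_add {κ : Type*} {u : κ → ι → K}
    (hu : LinearIndependent K u) {a b : κ} (hab : a ≠ b) :
    LinearIndependent K fun o => Option.casesOn' o (vecMulVec (u a + u b) (u a + u b))
      fun k => vecMulVec (u k) (u k) := by
  classical
  obtain ⟨y, hy⟩ := exists_dotProduct_eq_ite hu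
  refine (linearIndependent_vecMulVec_self hu).option fun hmem => ?_
  have hker : span K (Set.range fun k => vecMulVec (u k) (u k)) ≤
      LinearMap.ker (dotProductMulVecₗ (y a) (y b)) := by
    refine span_le.mpr (Set.range_subset_iff.mpr fun k => ?_)
    by_cases hk : a = k
    · simp [dotProduct_vecMulVec_mulVec, dotProduct_comm _ (y b), hy, ← hk, hab.symm]
    · simp [dotProduct_vecMulVec_mulVec, hy, hk]
  simpa [dotProduct_vecMulVec_mulVec, dotProduct_comm _ (y b), hy, hab, hab.symm,
    add_dotProduct, dotProduct_add] using hker hmem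

section

variable {T : Set (ι → K)} {F : Set (Matrix ι ι K)}

lemma finrank_span_le_of_vecMulVec_mem (hTF : ∀ v ∈ T, vecMulVec v v ∈ F) :
    finrank K (span K T) ≤ finrank K (span K F) := by
  obtain ⟨u, huT, hu⟩ := exists_linearIndependent_fin_finrank K T
  simpa using card_le_finrank_span_of_linearIndependent (K := K)
    (linearIndependent_vecMulVec_self hu) fun i => hTF _ (huT i)

lemma finrank_span_add_one_le_of_vecMulVec_mem (hT : ∀ u ∈ T, ∀ v ∈ T, u + v ∈ T)
    (hT₂ : 2 ≤ finrank K (span K T)) (hTF : ∀ v ∈ T, vecMulVec v v ∈ F) :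
    finrank K (span K T) + 1 ≤ finrank K (span K F) := by
  obtain ⟨u, huT, hu⟩ := exists_linearIndependent_fin_finrank K T
  have hli := linearIndependent_option_vecMulVec_add hu
    (a := ⟨0, by omega⟩) (b := ⟨1, by omega⟩) (by simp)
  simpa using card_le_finrank_span_of_linearIndependent (K := K) hli fun o => by
    cases o
    exacts [hTF _ (hT _ (huT _) _ (huT _)), hTF _ (huT _)]

end

lemma exists_ne_zero_dotProduct_eq_zero_of_span_ne_top {S : Set (ι → K)}
    (hS : span K S ≠ ⊤) : ∃ w ≠ 0, ∀ v ∈ S, v ⬝ᵥ w = 0 := by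
  obtain ⟨f, hf, hSf⟩ := (span K S).exists_le_ker_of_lt_top hS.lt_top
  refine ⟨(dotProductEquiv K ι).symm f, by simpa using hf, fun v hv => ?_⟩
  rw [dotProduct_comm, ← dotProductEquiv_apply_apply, LinearEquiv.apply_symm_apply]
  exact hSf (subset_span hv)

lemma card_sub_one_le_finrank_span {S : Set (ι → K)} {w : ι → K}
    (hS : ∀ x, x ⬝ᵥ w = 0 → x ∈ span K S) : Fintype.card ι - 1 ≤ finrank K (span K S) := by
  let f := dotProductEquiv K ι w
  have hker : LinearMap.ker f ≤ span K S := fun x hx => hS x (by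
    rw [dotProduct_comm]; exact hx)
  have hrange : finrank K (LinearMap.range f) ≤ 1 := (Submodule.finrank_le _).trans_eq (by simp)
  have := f.finrank_range_add_finrank_ker
  have := Submodule.finrank_mono hker
  simp only [Module.finrank_fintype_fun_eq_card] at *
  omega

end LinearAlgebra

section NonnegOrthogonal

variable {ι : Type*} [Fintype ι]

def nonnegOrthogonal (w : ι → ℝ) : Set (ι → ℝ) := {v | 0 ≤ v ∧ v ⬝ᵥ w = 0}

variable {w : ι → ℝ}

lemma add_mem_nonnegOrthogonal {u v : ι → ℝ} (hu : u ∈ nonnegOrthogonal w)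
    (hv : v ∈ nonnegOrthogonal w) : u + v ∈ nonnegOrthogonal w :=
  ⟨add_nonneg hu.1 hv.1, by rw [add_dotProduct, hu.2, hv.2, add_zero]⟩

lemma mem_span_nonnegOrthogonal {p x : ι → ℝ} (hp : p ∈ nonnegOrthogonal w)
    (hpx : ∀ j, p j = 0 → x j = 0) (hx : x ⬝ᵥ w = 0) : x ∈ span ℝ (nonnegOrthogonal w) := by
  -- `x + t • p ≥ 0` once `t ≥ |x j| / p j` for all `j`; the junk value `|x j| / 0 = 0` is harmless.
  set t := ∑ j, |x j| / p j
  have ht : 0 ≤ t := Finset.sum_nonneg fun j _ => div_nonneg (abs_nonneg _) (hp.1 j)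
  have hxtp : x + t • p ∈ nonnegOrthogonal w := by
    refine ⟨fun j => ?_, by rw [add_dotProduct, smul_dotProduct, hx, hp.2, smul_zero, add_zero]⟩
    rcases (hp.1 j).eq_or_lt with hpj | hpj
    · simp [hpx j hpj.symm, ← hpj]
    · have hle : |x j| / p j ≤ t := Finset.single_le_sum
        (f := fun j => |x j| / p j) (fun j _ => div_nonneg (abs_nonneg _) (hp.1 j))
        (Finset.mem_univ j)
      rw [div_le_iff₀ hpj] at hle
      simp only [Pi.add_apply, Pi.smul_apply, smul_eq_mul, Pi.zero_apply]
      linarith [neg_abs_le (x j)]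
  have := sub_mem (subset_span hxtp) (smul_mem _ t (subset_span hp))
  simpa using this

lemma exists_pos_dotProduct_eq_zero {i j : ι} (hi : 0 < w i) (hj : w j < 0) :
    ∃ p : ι → ℝ, (∀ k, 0 < p k) ∧ p ⬝ᵥ w = 0 := by
  -- With `P, N` the total positive and negative mass of `w`, take `p k = N` where `w k > 0`
  -- and `p k = P` elsewhere.
  set P := ∑ k, max (w k) 0
  set N := ∑ k, max (-w k) 0
  have hP : 0 < P := hi.trans_le <| (le_max_left _ _).trans <|
    Finset.single_le_sum (fun k _ => le_max_right (w k) 0) (Finset.mem_univ i)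
  have hN : 0 < N := (neg_pos.mpr hj).trans_le <| (le_max_left _ _).trans <|
    Finset.single_le_sum (fun k _ => le_max_right (-w k) 0) (Finset.mem_univ j)
  refine ⟨fun k => if 0 < w k then N else P, fun k => by dsimp only; split_ifs <;> assumption, ?_⟩
  have hterm : ∀ k, (if 0 < w k then N else P) * w k = N * max (w k) 0 - P * max (-w k) 0 := by
    intro k
    split_ifs with hk
    · rw [max_eq_left hk.le, max_eq_right (by linarith)]; ring
    · rw [max_eq_right (not_lt.mp hk), max_eq_left (by linarith)]; ring
  simp only [dotProduct, hterm, Finset.sum_sub_distrib, ← Finset.mul_sum]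
  ring

lemma orthogonal_subset_span_nonnegOrthogonal [DecidableEq ι]
    (hw : (∃ i j, 0 < w i ∧ w j < 0) ∨ ∃ i, w = Pi.single i 1) :
    ∀ x, x ⬝ᵥ w = 0 → x ∈ span ℝ (nonnegOrthogonal w) := by
  intro x hx
  rcases hw with ⟨i, j, hi, hj⟩ | ⟨i, rfl⟩
  · obtain ⟨p, hp, hpw⟩ := exists_pos_dotProduct_eq_zero hi hj
    exact mem_span_nonnegOrthogonal ⟨fun k => (hp k).le, hpw⟩ (fun k hk => absurd hk (hp k).ne') hx
  · refine mem_span_nonnegOrthogonal (p := fun k => if k = i then 0 else 1)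
      ⟨fun k => by dsimp; split_ifs <;> norm_num, by simp [dotProduct_single]⟩
      (fun k hk => ?_) hx
    rw [dotProduct_single, mul_one] at hx
    by_cases hki : k = i
    · rwa [hki]
    · simp [hki] at hk

lemma apply_eq_zero_of_mem_nonnegOrthogonal (hw : ¬∃ j k, 0 < w j ∧ w k < 0) {i : ι}
    (hi : w i ≠ 0) {v : ι → ℝ} (hv : v ∈ nonnegOrthogonal w) : v i = 0 := by
  -- All terms `v k * w k` of `v ⬝ᵥ w = 0` have the same sign, so they all vanish.
  simp only [not_exists, not_and, not_lt] at hw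
  have hterms : ∀ k, v k * w k = 0 := by
    rcases hi.lt_or_gt with hi | hi
    · have hwk : ∀ k, v k * w k ≤ 0 := fun k =>
        mul_nonpos_of_nonneg_of_nonpos (hv.1 k) (not_lt.mp fun hk => (hw k i hk).not_gt hi)
      exact fun k => (Finset.sum_eq_zero_iff_of_nonpos fun k _ => hwk k).mp hv.2 k
        (Finset.mem_univ k)
    · have hwk : ∀ k, 0 ≤ v k * w k := fun k => mul_nonneg (hv.1 k) (hw i k hi)
      exact fun k => (Finset.sum_eq_zero_iff_of_nonneg fun k _ => hwk k).mp hv.2 k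
        (Finset.mem_univ k)
  exact (mul_eq_zero.mp (hterms i)).resolve_right hi

end NonnegOrthogonal

namespace CPset

variable {n : ℕ}

lemma zero_mem : (0 : Matrix (Fin n) (Fin n) ℝ) ∈ CPset n :=
  ⟨0, Fin.elim0, Fin.elim0, fun k => k.elim0, fun k => k.elim0, by simp⟩

lemma vecMulVec_mem {v : Fin n → ℝ} (hv : 0 ≤ v) : vecMulVec v v ∈ CPset n :=
  ⟨1, fun _ => 1, fun _ => v, fun _ => zero_le_one, fun _ => hv, by simp⟩

lemma add_mem {X Y : Matrix (Fin n) (Fin n) ℝ} (hX : X ∈ CPset n) (hY : Y ∈ CPset n) :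
    X + Y ∈ CPset n := by
  obtain ⟨m₁, c₁, v₁, hc₁, hv₁, rfl⟩ := hX
  obtain ⟨m₂, c₂, v₂, hc₂, hv₂, rfl⟩ := hY
  refine ⟨m₁ + m₂, Fin.append c₁ c₂, Fin.append v₁ v₂, fun k => ?_, fun k => ?_, ?_⟩
  · exact Fin.addCases (by simpa using hc₁) (by simpa using hc₂) k
  · exact Fin.addCases (by simpa using hv₁) (by simpa using hv₂) k
  · simp [Fin.sum_univ_add]

lemma smul_mem {c : ℝ} {X : Matrix (Fin n) (Fin n) ℝ} (hc : 0 ≤ c) (hX : X ∈ CPset n) :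
    c • X ∈ CPset n := by
  obtain ⟨m, d, v, hd, hv, rfl⟩ := hX
  exact ⟨m, fun k => c * d k, v, fun k => mul_nonneg hc (hd k), hv,
    by simp [Finset.smul_sum, smul_smul]⟩

lemma sum_mem {κ : Type*} (s : Finset κ) {X : κ → Matrix (Fin n) (Fin n) ℝ}
    (hX : ∀ k ∈ s, X k ∈ CPset n) : ∑ k ∈ s, X k ∈ CPset n :=
  Finset.sum_induction X (· ∈ CPset n) (fun _ _ => add_mem) zero_mem hX

lemma dotProduct_mulVec_nonneg (w : Fin n → ℝ) {X : Matrix (Fin n) (Fin n) ℝ}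
    (hX : X ∈ CPset n) : 0 ≤ w ⬝ᵥ X *ᵥ w := by
  obtain ⟨m, c, v, hc, -, rfl⟩ := hX
  rw [dotProduct_sum_smul_vecMulVec_mulVec]
  exact Finset.sum_nonneg fun k _ => mul_nonneg (hc k) (sq_nonneg _)

end CPset

section Faces

variable {n : ℕ}

def rankOneGenerators (F : Set (Matrix (Fin n) (Fin n) ℝ)) : Set (Fin n → ℝ) :=
  {v | 0 ≤ v ∧ vecMulVec v v ∈ F}

def quadFace (w : Fin n → ℝ) : Set (Matrix (Fin n) (Fin n) ℝ) :=
  {X | X ∈ CPset n ∧ w ⬝ᵥ X *ᵥ w = 0}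

lemma isFaceCP_quadFace (w : Fin n → ℝ) : IsFaceCP n (quadFace w) := by
  refine ⟨⟨0, CPset.zero_mem, by simp⟩, fun X hX => hX.1, ?_, ?_, ?_⟩
  · intro X hX Y hY a b ha hb _
    refine ⟨CPset.add_mem (CPset.smul_mem ha hX.1) (CPset.smul_mem hb hY.1), ?_⟩
    simp [add_mulVec, smul_mulVec, hX.2, hY.2]
  · intro c hc X hX
    exact ⟨CPset.smul_mem hc.le hX.1, by simp [smul_mulVec, hX.2]⟩
  · intro X hX Y hY hXY
    have hsum : w ⬝ᵥ X *ᵥ w + w ⬝ᵥ Y *ᵥ w = 0 := by rw [← dotProduct_add, ← add_mulVec, hXY.2]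
    have := CPset.dotProduct_mulVec_nonneg w hX
    have := CPset.dotProduct_mulVec_nonneg w hY
    exact ⟨⟨hX, by linarith⟩, ⟨hY, by linarith⟩⟩

lemma mem_rankOneGenerators_quadFace {w v : Fin n → ℝ} :
    v ∈ rankOneGenerators (quadFace w) ↔ v ∈ nonnegOrthogonal w := by
  simp only [rankOneGenerators, quadFace, nonnegOrthogonal, Set.mem_ofPred_eq,
    dotProduct_vecMulVec_mulVec, dotProduct_comm w v, mul_self_eq_zero]
  exact ⟨fun h => ⟨h.1, h.2.2⟩, fun h => ⟨h.1, CPset.vecMulVec_mem h.1, h.2⟩⟩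

lemma quadFace_ne_CPset {w : Fin n → ℝ} (hw : w ≠ 0) : quadFace w ≠ CPset n := by
  intro h
  refine hw (funext fun i => ?_)
  have : Pi.single i 1 ∈ rankOneGenerators (quadFace w) := by
    rw [h]
    exact ⟨Pi.single_nonneg.mpr zero_le_one, CPset.vecMulVec_mem (Pi.single_nonneg.mpr zero_le_one)⟩
  simpa using (mem_rankOneGenerators_quadFace.mp this).2

namespace IsFaceCP

variable {F : Set (Matrix (Fin n) (Fin n) ℝ)}

lemma mem_rankOneGenerators (hF : IsFaceCP n F) {m : ℕ} {c : Fin m → ℝ}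
    {v : Fin m → Fin n → ℝ} (hc : ∀ k, 0 ≤ c k) (hv : ∀ k, 0 ≤ v k)
    (hX : ∑ k, c k • vecMulVec (v k) (v k) ∈ F) {k : Fin m} (hk : 0 < c k) :
    v k ∈ rankOneGenerators F := by
  classical
  obtain ⟨-, -, -, hcone, hextreme⟩ := hF
  have hrest : ∑ j ∈ Finset.univ.erase k, c j • vecMulVec (v j) (v j) ∈ CPset n :=
    CPset.sum_mem _ fun j _ => CPset.smul_mem (hc j) (CPset.vecMulVec_mem (hv j))
  rw [← Finset.add_sum_erase _ _ (Finset.mem_univ k)] at hX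
  have hterm := (hextreme _ (CPset.smul_mem (hc k) (CPset.vecMulVec_mem (hv k))) _ hrest hX).1
  refine ⟨hv k, ?_⟩
  simpa [smul_smul, inv_mul_cancel₀ hk.ne'] using hcone (c k)⁻¹ (inv_pos.mpr hk) _ hterm

lemma subset_quadFace (hF : IsFaceCP n F) {w : Fin n → ℝ}
    (hw : ∀ v ∈ rankOneGenerators F, v ⬝ᵥ w = 0) : F ⊆ quadFace w := by
  intro X hXF
  refine ⟨hF.2.1 hXF, ?_⟩
  obtain ⟨m, c, v, hc, hv, rfl⟩ := hF.2.1 hXF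
  rw [dotProduct_sum_smul_vecMulVec_mulVec]
  refine Finset.sum_eq_zero fun k _ => ?_
  rcases (hc k).eq_or_lt with hk | hk
  · rw [← hk, zero_mul]
  · rw [hw _ (hF.mem_rankOneGenerators hc hv hXF hk), sq, mul_zero, mul_zero]

end IsFaceCP

namespace IsMaxFaceCP

variable {F : Set (Matrix (Fin n) (Fin n) ℝ)}

lemma eq_quadFace (hF : IsMaxFaceCP n F) {w : Fin n → ℝ} (hw₀ : w ≠ 0)
    (hw : ∀ v ∈ rankOneGenerators F, v ⬝ᵥ w = 0) : F = quadFace w :=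
  have ⟨hface, _, hmax⟩ := hF
  (hmax _ (isFaceCP_quadFace w) (quadFace_ne_CPset hw₀) (hface.subset_quadFace hw)).symm

lemma exists_eq_quadFace (hF : IsMaxFaceCP n F) (hS : span ℝ (rankOneGenerators F) ≠ ⊤) :
    ∃ w, F = quadFace w ∧ ((∃ i j, 0 < w i ∧ w j < 0) ∨ ∃ i, w = Pi.single i 1) := by
  obtain ⟨w, hw₀, hw⟩ := exists_ne_zero_dotProduct_eq_zero_of_span_ne_top hS
  have hFw := hF.eq_quadFace hw₀ hw
  by_cases hmix : ∃ i j, 0 < w i ∧ w j < 0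
  · exact ⟨w, hFw, Or.inl hmix⟩
  -- Otherwise `w` has constant sign, so every generator vanishes where `w` does not.
  obtain ⟨i, hi⟩ := Function.ne_iff.mp hw₀
  refine ⟨Pi.single i 1, hF.eq_quadFace (by simp) fun v hv => ?_, Or.inr ⟨i, rfl⟩⟩
  rw [hFw, mem_rankOneGenerators_quadFace] at hv
  rw [dotProduct_single, mul_one]
  exact apply_eq_zero_of_mem_nonnegOrthogonal hmix hi hv

end IsMaxFaceCP

end Faces

/-- For `n > 2`, every maximal face of the completely positive cone `CP(n)`
has dimension (of its linear span) at least `n`. -/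
theorem maxFace_dim_ge (n : ℕ) (hn : 2 < n)
    (F : Set (Matrix (Fin n) (Fin n) ℝ)) (hF : IsMaxFaceCP n F) :
    n ≤ Module.finrank ℝ (Submodule.span ℝ F) := by
  by_cases hS : span ℝ (rankOneGenerators F) = ⊤
  · calc n = finrank ℝ (span ℝ (rankOneGenerators F)) := by rw [hS, finrank_top, finrank_fin_fun]
      _ ≤ finrank ℝ (span ℝ F) := finrank_span_le_of_vecMulVec_mem fun v hv => hv.2
  obtain ⟨w, rfl, hw⟩ := hF.exists_eq_quadFace hS
  have hdim : n - 1 ≤ finrank ℝ (span ℝ (nonnegOrthogonal w)) := by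
    simpa using card_sub_one_le_finrank_span (orthogonal_subset_span_nonnegOrthogonal hw)
  calc n ≤ finrank ℝ (span ℝ (nonnegOrthogonal w)) + 1 := by omega
    _ ≤ finrank ℝ (span ℝ (quadFace w)) :=
      finrank_span_add_one_le_of_vecMulVec_mem (fun _ hu _ hv => add_mem_nonnegOrthogonal hu hv)
        (by omega) fun _ hv => (mem_rankOneGenerators_quadFace.mpr hv).2
end
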